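/- arXiv:1711.10532 — 7 statements merged into one kernel-verified Lean document; each statement's English description precedes it below -/
import Mathlib

section
/- Openness of admissibility under compactly supported perturbations (Lemma 2.1): Let 𝖧:ℝ^{2n}→ℝ be admissible, with Liouville vector fields X†,X‡ and constants c₁,c₂,c₃,L,c₄,c₅,ν as in (H1)–(H3), and let K⊆ℝ^{2n} be a nonempty compact set. Set θ:=½·min{ν, c₅/(c₄(sup_{x∈K}‖x‖²+1))}. Then for every smooth h:ℝ^{2n}→ℝ supported in K with max_{0≤j≤3} sup_x‖D^j h_x‖<θ, the Hamiltonian 𝖧+h is admissible; more precisely: (i) d(𝖧+h)_x(X†(x))≥c₂‖x‖²−(c₃+θ·c₁(sup_{x∈K}‖x‖+1)) for all x∈ℝ^{2n}; (ii) ‖D³(𝖧+h)_x‖·‖x‖≤L+θ·sup_{x∈K}‖x‖ for all x; (iii) (𝖧+h)⁻¹((−ν/2,ν/2))⊆𝖧⁻¹((−ν,ν)), and on (𝖧+h)⁻¹((−ν/2,ν/2)) one has d(𝖧+h)_x(X‡(x))≥c₅/2 and ‖X‡(x)‖≤c₄(‖x‖²+1). In particular all Hamiltonians 𝖧+h of this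 family satisfy (H1)–(H3) with the same Liouville vector fields and one common set of parameters depending only on 𝖧 and K. -/
open MeasureTheory intervalIntegral Set
open scoped RealInnerProductSpace Topology

noncomputable section

/-- Phase space `ℝ^{2n}`, realized as `ℂ^n` with its real inner product. -/
abbrev E (n : ℕ) := EuclideanSpace ℂ (Fin n)

/-- The standard linear complex structure `J₀` (multiplication by `i`). -/
def J0 {n : ℕ} (x : E n) : E n := Complex.I • x

/-- The standard symplectic form `ω₀(u,w) = ⟨J₀u, w⟩`. -/
def om {n : ℕ} (u w : E n) : ℝ := @inner ℝ _ _ (J0 u) w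

/-- The Hamiltonian vector field `X^H = J₀ ∇H`. -/
def XH {n : ℕ} (H : E n → ℝ) (x : E n) : E n := J0 (gradient H x)

/-- A loop: a smooth 1-periodic map `ℝ → ℝ^{2n}`. -/
def IsLoop {n : ℕ} (v : ℝ → E n) : Prop := ContDiff ℝ (⊤ : ℕ∞) v ∧ ∀ t, v (t + 1) = v t

/-- The `L²` norm on loops. -/
def L2 {n : ℕ} (v : ℝ → E n) : ℝ := Real.sqrt (∫ t in (0:ℝ)..1, ‖v t‖ ^ 2)

/-- The Rabinowitz action functional. -/
def RabAction {n : ℕ} (H : E n → ℝ) (v : ℝ → E n) (η : ℝ) : ℝ :=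
  (∫ t in (0:ℝ)..1, (1 / 2) * om (v t) (deriv v t)) - η * ∫ t in (0:ℝ)..1, H (v t)

/-- The norm `‖∇𝒜^H(v,η)‖ = ‖∂_t v − η X^H(v)‖_{L²} + |∫₀¹ H(v)|` of the `L²` gradient. -/
def gradNorm {n : ℕ} (H : E n → ℝ) (v : ℝ → E n) (η : ℝ) : ℝ :=
  L2 (fun t => deriv v t - η • XH H (v t)) + |∫ t in (0:ℝ)..1, H (v t)|

/-- A Liouville vector field on a set `U`. -/
def IsLiouvilleOn {n : ℕ} (X : E n → E n) (U : Set (E n)) : Prop :=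
  ∀ x ∈ U, ∀ u w : E n, om (fderiv ℝ X x u) w + om u (fderiv ℝ X x w) = om u w

/-- Condition (H1). -/
def SatH1 {n : ℕ} (H : E n → ℝ) (c₁ c₂ c₃ : ℝ) : Prop :=
  ∃ X : E n → E n, ContDiff ℝ (⊤ : ℕ∞) X ∧ IsLiouvilleOn X Set.univ ∧
    (∀ x, ‖X x‖ ≤ c₁ * (‖x‖ + 1)) ∧ ∀ x, fderiv ℝ H x (X x) ≥ c₂ * ‖x‖ ^ 2 - c₃

/-- Condition (H2). -/
def SatH2 {n : ℕ} (H : E n → ℝ) (L : ℝ) : Prop :=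
  ∀ x, ‖iteratedFDeriv ℝ 3 H x‖ * ‖x‖ ≤ L

/-- Condition (H3). -/
def SatH3 {n : ℕ} (H : E n → ℝ) (c₄ c₅ ν : ℝ) : Prop :=
  ∃ X : E n → E n, IsLiouvilleOn X (H ⁻¹' Ioo (-ν) ν) ∧
    (∀ x ∈ H ⁻¹' Ioo (-ν) ν, ‖X x‖ ≤ c₄ * (‖x‖ ^ 2 + 1)) ∧
    ∀ x ∈ H ⁻¹' Ioo (-ν) ν, fderiv ℝ H x (X x) ≥ c₅

/-- Admissible Hamiltonians. -/
def Admissible {n : ℕ} (H : E n → ℝ) : Prop :=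
  ContDiff ℝ (⊤ : ℕ∞) H ∧ ∃ c₁ c₂ c₃ L c₄ c₅ ν : ℝ,
    0 < c₁ ∧ 0 < c₂ ∧ 0 ≤ c₃ ∧ 0 ≤ L ∧ 0 < c₄ ∧ 0 < c₅ ∧ 0 < ν ∧
    SatH1 H c₁ c₂ c₃ ∧ SatH2 H L ∧ SatH3 H c₄ c₅ ν

/-- Uniform bound on the Hessian. -/
def HessBound {n : ℕ} (H : E n → ℝ) (M : ℝ) : Prop :=
  ∀ x, ‖iteratedFDeriv ℝ 2 H x‖ ≤ M

/-- Linear growth of the gradient. -/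
def GradBound {n : ℕ} (H : E n → ℝ) (M h₁ : ℝ) : Prop :=
  ∀ x, ‖gradient H x‖ ≤ h₁ + M * ‖x‖


/-- **Lemma 2.1 (openness of admissibility under compactly supported perturbations).** -/
theorem openness_of_admissibility {n : ℕ} (HH : E n → ℝ) (hHH : ContDiff ℝ (⊤ : ℕ∞) HH)
    (c₁ c₂ c₃ L c₄ c₅ ν : ℝ)
    (hc₁ : 0 < c₁) (hc₂ : 0 < c₂) (hc₃ : 0 ≤ c₃) (hL : 0 ≤ L)
    (hc₄ : 0 < c₄) (hc₅ : 0 < c₅) (hν : 0 < ν)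
    -- the Liouville vector field X† of (H1)
    (Xd : E n → E n) (hXdsm : ContDiff ℝ (⊤ : ℕ∞) Xd) (hXdLiou : IsLiouvilleOn Xd Set.univ)
    (hXd1 : ∀ x, ‖Xd x‖ ≤ c₁ * (‖x‖ + 1))
    (hXd2 : ∀ x, fderiv ℝ HH x (Xd x) ≥ c₂ * ‖x‖ ^ 2 - c₃)
    -- condition (H2)
    (hH2 : SatH2 HH L)
    -- the Liouville vector field X‡ of (H3)
    (Xdd : E n → E n) (hXddLiou : IsLiouvilleOn Xdd (HH ⁻¹' Ioo (-ν) ν))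
    (hXdd1 : ∀ x ∈ HH ⁻¹' Ioo (-ν) ν, ‖Xdd x‖ ≤ c₄ * (‖x‖ ^ 2 + 1))
    (hXdd2 : ∀ x ∈ HH ⁻¹' Ioo (-ν) ν, fderiv ℝ HH x (Xdd x) ≥ c₅)
    -- the compact set and the size of the allowed perturbations
    (K : Set (E n)) (hK : IsCompact K) (hKne : K.Nonempty)
    (θ : ℝ)
    (hθ : θ = (1 / 2) * min ν (c₅ / (c₄ * (sSup ((fun x : E n => ‖x‖ ^ 2) '' K) + 1))))
    -- the perturbation
    (h : E n → ℝ) (hsm : ContDiff ℝ (⊤ : ℕ∞) h) (hsupp : tsupport h ⊆ K)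
    (hsmall : ∀ j : ℕ, j ≤ 3 → ∀ x, ‖iteratedFDeriv ℝ j h x‖ < θ) :
    Admissible (fun x => HH x + h x) ∧
    -- (i)
    (∀ x, fderiv ℝ (fun y => HH y + h y) x (Xd x) ≥
      c₂ * ‖x‖ ^ 2 - (c₃ + θ * (c₁ * (sSup ((fun x : E n => ‖x‖) '' K) + 1)))) ∧
    -- (ii)
    (∀ x, ‖iteratedFDeriv ℝ 3 (fun y => HH y + h y) x‖ * ‖x‖ ≤
      L + θ * sSup ((fun x : E n => ‖x‖) '' K)) ∧
    -- (iii)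
    ((fun y => HH y + h y) ⁻¹' Ioo (-(ν / 2)) (ν / 2) ⊆ HH ⁻¹' Ioo (-ν) ν) ∧
    (∀ x ∈ (fun y => HH y + h y) ⁻¹' Ioo (-(ν / 2)) (ν / 2),
      fderiv ℝ (fun y => HH y + h y) x (Xdd x) ≥ c₅ / 2 ∧ ‖Xdd x‖ ≤ c₄ * (‖x‖ ^ 2 + 1)) := by
  -- sup bounds on K
  have hKb : BddAbove ((fun x : E n => ‖x‖) '' K) := (hK.image continuous_norm).bddAbove
  have hKb2 : BddAbove ((fun x : E n => ‖x‖ ^ 2) '' K) :=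
    (hK.image (continuous_norm.pow 2)).bddAbove
  set S := sSup ((fun x : E n => ‖x‖) '' K) with hSdef
  set S2 := sSup ((fun x : E n => ‖x‖ ^ 2) '' K) with hS2def
  have hleS : ∀ x ∈ K, ‖x‖ ≤ S := fun x hx => le_csSup hKb ⟨x, hx, rfl⟩
  have hleS2 : ∀ x ∈ K, ‖x‖ ^ 2 ≤ S2 := fun x hx => le_csSup hKb2 ⟨x, hx, rfl⟩
  obtain ⟨x₀, hx₀⟩ := hKne
  have hS0 : 0 ≤ S := le_trans (norm_nonneg x₀) (hleS x₀ hx₀)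
  have hS20 : 0 ≤ S2 := le_trans (sq_nonneg _) (hleS2 x₀ hx₀)
  have hden : 0 < c₄ * (S2 + 1) := by positivity
  -- properties of θ
  have hθ0 : 0 < θ := by
    rw [hθ]; exact mul_pos (by norm_num) (lt_min hν (div_pos hc₅ hden))
  have hθν : θ ≤ ν / 2 := by
    rw [hθ]; have := min_le_left ν (c₅ / (c₄ * (S2 + 1))); linarith
  have hθc : θ * (c₄ * (S2 + 1)) ≤ c₅ / 2 := by
    rw [hθ]
    have h1 : min ν (c₅ / (c₄ * (S2 + 1))) ≤ c₅ / (c₄ * (S2 + 1)) := min_le_right _ _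
    have h2 : (c₅ / (c₄ * (S2 + 1))) * (c₄ * (S2 + 1)) = c₅ := div_mul_cancel₀ _ hden.ne'
    nlinarith [mul_le_mul_of_nonneg_right h1 hden.le]
  -- vanishing outside K
  have hnK : ∀ x : E n, x ∉ K → x ∉ tsupport h := fun x hx hm => hx (hsupp hm)
  have hzero : ∀ (j : ℕ) (x : E n), x ∉ K → iteratedFDeriv ℝ j h x = 0 := by
    intro j x hx
    exact Function.notMem_support.mp fun hs => hnK x hx (support_iteratedFDeriv_subset j hs)
  have hfzero : ∀ x ∉ K, fderiv ℝ h x = 0 := by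
    intro x hx
    exact Function.notMem_support.mp fun hs => hnK x hx (support_fderiv_subset ℝ hs)
  -- bounds on h and its derivatives
  have hfnorm : ∀ x, ‖fderiv ℝ h x‖ < θ := by
    intro x
    have h1 := hsmall 1 (by norm_num) x
    calc ‖fderiv ℝ h x‖ = ‖iteratedFDeriv ℝ 0 (fderiv ℝ h) x‖ := norm_iteratedFDeriv_zero.symm
      _ = ‖iteratedFDeriv ℝ 1 h x‖ := norm_iteratedFDeriv_fderiv
      _ < θ := h1
  have habs : ∀ x, |h x| < θ := by
    intro x
    have h1 := hsmall 0 (by norm_num) x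
    rwa [norm_iteratedFDeriv_zero, Real.norm_eq_abs] at h1
  -- derivative of the sum
  have hfadd : ∀ x, fderiv ℝ (fun y => HH y + h y) x = fderiv ℝ HH x + fderiv ℝ h x :=
    fun x => fderiv_fun_add (hHH.differentiable (by simp) x) (hsm.differentiable (by simp) x)
  -- claim (i)
  have claim1 : ∀ x, fderiv ℝ (fun y => HH y + h y) x (Xd x) ≥
      c₂ * ‖x‖ ^ 2 - (c₃ + θ * (c₁ * (S + 1))) := by
    intro x
    rw [hfadd x]
    simp only [ContinuousLinearMap.add_apply]
    have hbase := hXd2 x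
    have hpert : fderiv ℝ h x (Xd x) ≥ -(θ * (c₁ * (S + 1))) := by
      by_cases hx : x ∈ K
      · have h1 : |fderiv ℝ h x (Xd x)| ≤ ‖fderiv ℝ h x‖ * ‖Xd x‖ := by
          simpa [Real.norm_eq_abs] using (fderiv ℝ h x).le_opNorm (Xd x)
        have h2 : ‖fderiv ℝ h x‖ * ‖Xd x‖ ≤ θ * (c₁ * (S + 1)) := by
          apply mul_le_mul (hfnorm x).le ?_ (norm_nonneg _) hθ0.le
          exact le_trans (hXd1 x) (by nlinarith [hleS x hx])
        have := (abs_le.mp (h1.trans h2)).1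
        linarith
      · rw [hfzero x hx]
        simp only [ContinuousLinearMap.zero_apply]
        nlinarith [mul_nonneg hθ0.le (mul_nonneg hc₁.le (by linarith : (0:ℝ) ≤ S + 1))]
    linarith
  -- claim (ii)
  have hadd3 : ∀ x, iteratedFDeriv ℝ 3 (fun y => HH y + h y) x =
      iteratedFDeriv ℝ 3 HH x + iteratedFDeriv ℝ 3 h x := by
    intro x
    exact iteratedFDeriv_add_apply (hHH.of_le (by exact WithTop.coe_le_coe.mpr (le_top : (3 : ℕ∞) ≤ ⊤))).contDiffAt (hsm.of_le (by exact WithTop.coe_le_coe.mpr (le_top : (3 : ℕ∞) ≤ ⊤))).contDiffAt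
  have claim2 : ∀ x, ‖iteratedFDeriv ℝ 3 (fun y => HH y + h y) x‖ * ‖x‖ ≤ L + θ * S := by
    intro x
    rw [hadd3 x]
    have hn := norm_add_le (iteratedFDeriv ℝ 3 HH x) (iteratedFDeriv ℝ 3 h x)
    by_cases hx : x ∈ K
    · have h1 : ‖iteratedFDeriv ℝ 3 h x‖ * ‖x‖ ≤ θ * S :=
        mul_le_mul (hsmall 3 le_rfl x).le (hleS x hx) (norm_nonneg _) hθ0.le
      nlinarith [hH2 x, norm_nonneg x, norm_nonneg (iteratedFDeriv ℝ 3 h x),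
        norm_nonneg (iteratedFDeriv ℝ 3 HH x)]
    · rw [hzero 3 x hx]
      simp only [add_zero]
      exact le_trans (hH2 x) (by nlinarith)
  -- claim (iii): inclusion
  have hsub : (fun y => HH y + h y) ⁻¹' Ioo (-(ν / 2)) (ν / 2) ⊆ HH ⁻¹' Ioo (-ν) ν := by
    intro x hx
    simp only [mem_preimage, mem_Ioo] at hx ⊢
    have h1 := abs_lt.mp (habs x)
    constructor <;> linarith [hx.1, hx.2, h1.1, h1.2]
  -- claim (iii): bounds
  have claim3 : ∀ x ∈ (fun y => HH y + h y) ⁻¹' Ioo (-(ν / 2)) (ν / 2),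
      fderiv ℝ (fun y => HH y + h y) x (Xdd x) ≥ c₅ / 2 ∧ ‖Xdd x‖ ≤ c₄ * (‖x‖ ^ 2 + 1) := by
    intro x hx
    have hx' := hsub hx
    refine ⟨?_, hXdd1 x hx'⟩
    rw [hfadd x]
    simp only [ContinuousLinearMap.add_apply]
    have hbase := hXdd2 x hx'
    by_cases hk : x ∈ K
    · have h1 : |fderiv ℝ h x (Xdd x)| ≤ ‖fderiv ℝ h x‖ * ‖Xdd x‖ := by
        simpa [Real.norm_eq_abs] using (fderiv ℝ h x).le_opNorm (Xdd x)
      have h2 : ‖fderiv ℝ h x‖ * ‖Xdd x‖ ≤ θ * (c₄ * (S2 + 1)) := by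
        apply mul_le_mul (hfnorm x).le ?_ (norm_nonneg _) hθ0.le
        exact le_trans (hXdd1 x hx') (by nlinarith [hleS2 x hk])
      have := (abs_le.mp (h1.trans h2)).1
      linarith
    · rw [hfzero x hk]
      simp only [ContinuousLinearMap.zero_apply, add_zero]
      linarith
  -- nonnegativity of derived constants
  have hθS : 0 ≤ θ * S := mul_nonneg hθ0.le hS0
  have hc₃' : 0 ≤ c₃ + θ * (c₁ * (S + 1)) := by nlinarith
  refine ⟨⟨hHH.add hsm, c₁, c₂, c₃ + θ * (c₁ * (S + 1)), L + θ * S, c₄, c₅ / 2, ν / 2,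
    hc₁, hc₂, hc₃', by linarith, hc₄, by linarith, by linarith,
    ⟨Xd, hXdsm, hXdLiou, hXd1, claim1⟩, claim2,
    ⟨Xdd, fun x hx => hXddLiou x (hsub hx), fun x hx => (claim3 x hx).2,
      fun x hx => (claim3 x hx).1⟩⟩, claim1, claim2, hsub, claim3⟩
end
end

section
/- Small action gradient forces the loop close to the zero level set (Lemma 3.2): Let H:ℝ^{2n}→ℝ be smooth and μ>0. (i) If a loop v and η∈ℝ satisfy ‖∇𝒜^H(v,η)‖<ε for some ε≤μ/2, then there exists t₀∈[0,1] with |H(v(t₀))|<μ/2. (ii) If in addition ‖∇H(x)‖≤h₁+M‖x‖ for all x∈ℝ^{2n}, ‖v‖_{L²}≤𝗏 for some 𝗏>0, and ε≤(μ/2)·min{1, 1/(M𝗏+h₁)}, then |H(v(t))|<μ for all t∈[0,1]. -/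
open MeasureTheory intervalIntegral Set
open scoped RealInnerProductSpace Topology

noncomputable section

/- ### Auxiliary lemmas -/

lemma aux_lt_integral (f : ℝ → ℝ) (hf : Continuous f) (c : ℝ)
    (h : ∀ t ∈ Icc (0:ℝ) 1, c < f t) : c < ∫ t in (0:ℝ)..1, f t := by
  obtain ⟨s, hs, hmin⟩ := isCompact_Icc.exists_isMinOn (nonempty_Icc.mpr zero_le_one)
    hf.continuousOn
  have h1 : ∫ _ in (0:ℝ)..1, f s ≤ ∫ t in (0:ℝ)..1, f t := by
    apply intervalIntegral.integral_mono_on zero_le_one intervalIntegrable_const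
      (hf.intervalIntegrable 0 1)
    intro t ht; exact hmin ht
  simp only [intervalIntegral.integral_const, sub_zero, one_smul] at h1
  exact lt_of_lt_of_le (h s hs) h1

lemma exists_abs_le (f : ℝ → ℝ) (hf : Continuous f) :
    ∃ t₀ ∈ Icc (0:ℝ) 1, |f t₀| ≤ |∫ t in (0:ℝ)..1, f t| := by
  by_contra hcon
  push_neg at hcon
  set c := |∫ t in (0:ℝ)..1, f t| with hc
  have hc0 : 0 ≤ c := abs_nonneg _
  have hne : ∀ t ∈ Icc (0:ℝ) 1, f t ≠ 0 := by
    intro t ht h0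
    have := hcon t ht
    rw [h0, abs_zero] at this
    linarith
  rcases lt_or_gt_of_ne (hne 0 (by norm_num)) with h0 | h0
  · have hneg : ∀ t ∈ Icc (0:ℝ) 1, f t < 0 := by
      intro t ht
      by_contra hge
      push_neg at hge
      obtain ⟨s, hs, hfs⟩ := intermediate_value_Icc ht.1 hf.continuousOn
        (mem_Icc.mpr ⟨le_of_lt h0, hge⟩)
      exact hne s (Icc_subset_Icc le_rfl ht.2 hs) hfs
    have h2 : ∀ t ∈ Icc (0:ℝ) 1, c < -f t := by
      intro t ht
      have := hcon t ht
      rwa [abs_of_neg (hneg t ht)] at this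
    have h3 := aux_lt_integral (fun t => -f t) hf.neg c h2
    rw [intervalIntegral.integral_neg] at h3
    linarith [neg_le_abs (∫ t in (0:ℝ)..1, f t)]
  · have hpos : ∀ t ∈ Icc (0:ℝ) 1, 0 < f t := by
      intro t ht
      by_contra hge
      push_neg at hge
      obtain ⟨s, hs, hfs⟩ := intermediate_value_Icc' ht.1 hf.continuousOn
        (mem_Icc.mpr ⟨hge, le_of_lt h0⟩)
      exact hne s (Icc_subset_Icc le_rfl ht.2 hs) hfs
    have h2 : ∀ t ∈ Icc (0:ℝ) 1, c < f t := by
      intro t ht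
      have := hcon t ht
      rwa [abs_of_pos (hpos t ht)] at this
    have h3 := aux_lt_integral f hf c h2
    linarith [le_abs_self (∫ t in (0:ℝ)..1, f t)]

lemma fderiv_eq_inner_gradient {n : ℕ} (H : E n → ℝ) (x y : E n) :
    fderiv ℝ H x y = ⟪gradient H x, y⟫ := by
  rw [gradient, InnerProductSpace.toDual_symm_apply]

lemma continuous_gradient' {n : ℕ} (H : E n → ℝ) (hH : ContDiff ℝ (⊤ : ℕ∞) H) :
    Continuous (fun x => gradient H x) :=
  (InnerProductSpace.toDual ℝ (E n)).symm.continuous.comp (hH.continuous_fderiv (by simp))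

lemma inner_grad_XH {n : ℕ} (H : E n → ℝ) (x : E n) (η : ℝ) :
    ⟪gradient H x, η • XH H x⟫ = 0 := by
  rw [real_inner_smul_right, XH, J0]
  have : ⟪gradient H x, Complex.I • gradient H x⟫ = 0 := by
    have key : ∀ g : E n, ⟪g, Complex.I • g⟫ = 0 := by
      intro g
      simp [PiLp.inner_apply, Complex.inner, mul_comm]
    exact key _
  rw [this, mul_zero]

set_option maxHeartbeats 1000000 in
/-- **Lemma 3.2 (small action gradient forces the loop close to the zero level set).** -/
theorem loop_close_to_level_set {n : ℕ} (H : E n → ℝ) (hH : ContDiff ℝ (⊤ : ℕ∞) H)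
    (μ ε : ℝ) (hμ : 0 < μ) (v : ℝ → E n) (η : ℝ) (hv : IsLoop v) :
    -- (i)
    (ε ≤ μ / 2 → gradNorm H v η < ε →
      ∃ t₀ ∈ Icc (0:ℝ) 1, |H (v t₀)| < μ / 2) ∧
    -- (ii)
    (∀ M h₁ 𝓋 : ℝ, (∀ x, ‖gradient H x‖ ≤ h₁ + M * ‖x‖) → 0 < 𝓋 → L2 v ≤ 𝓋 →
      ε ≤ (μ / 2) * min 1 (1 / (M * 𝓋 + h₁)) → gradNorm H v η < ε →
      ∀ t ∈ Icc (0:ℝ) 1, |H (v t)| < μ) := by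
  have hvC : Continuous v := hv.1.continuous
  have hHv : Continuous fun s => H (v s) := hH.continuous.comp hvC
  have hInt : |∫ s in (0:ℝ)..1, H (v s)| ≤ gradNorm H v η := by
    have h0 : 0 ≤ L2 (fun t => deriv v t - η • XH H (v t)) := Real.sqrt_nonneg _
    unfold gradNorm
    linarith
  have hgnn : (0:ℝ) ≤ gradNorm H v η :=
    add_nonneg (Real.sqrt_nonneg _) (abs_nonneg _)
  constructor
  · intro hεhalf hgrad
    obtain ⟨t₀, ht₀, habs⟩ := exists_abs_le (fun s => H (v s)) hHv
    exact ⟨t₀, ht₀, lt_of_le_of_lt (habs.trans hInt) (lt_of_lt_of_le hgrad hεhalf)⟩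
  · intro M h₁ 𝓋 hgb h𝓋 hL2v hε hgrad t ht
    have hε0 : 0 < ε := lt_of_le_of_lt hgnn hgrad
    have hεhalf : ε ≤ μ / 2 := by
      have h1 : min 1 (1 / (M * 𝓋 + h₁)) ≤ 1 := min_le_left _ _
      nlinarith
    -- the (easy) (i)-type conclusion at a point t₀
    obtain ⟨t₀, ht₀, habs0⟩ := exists_abs_le (fun s => H (v s)) hHv
    have hHt₀ : |H (v t₀)| < μ / 2 :=
      lt_of_le_of_lt (habs0.trans hInt) (lt_of_lt_of_le hgrad hεhalf)
    rcases Nat.eq_zero_or_pos n with hn | hn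
    · -- trivial case n = 0 : the loop is constant
      subst hn
      have hvconst : ∀ s : ℝ, v s = v t₀ := fun s => by ext i; exact Fin.elim0 i
      have : |H (v t)| < μ / 2 := by rw [hvconst t, ← hvconst t₀]; exact hHt₀
      linarith
    -- main case
    have hh₁ : 0 ≤ h₁ := by
      have := hgb 0
      simpa using le_trans (norm_nonneg _) this
    have hM : 0 ≤ M := by
      by_contra hMneg
      push_neg at hMneg
      have hMne : M ≠ 0 := ne_of_lt hMneg
      set R : ℝ := (h₁ + 1) / (-M) with hR
      have hRpos : 0 < R := div_pos (by linarith) (by linarith)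
      set x : E n := R • EuclideanSpace.single (⟨0, hn⟩ : Fin n) (1:ℂ) with hx
      have hxn : ‖x‖ = R := by
        rw [hx, norm_smul, EuclideanSpace.norm_single]
        simp [abs_of_pos hRpos]
      have h2 : (0:ℝ) ≤ h₁ + M * R := le_trans (norm_nonneg _) (hxn ▸ hgb x)
      have h3 : (-M) * R = h₁ + 1 := by
        rw [hR, ← mul_div_assoc, mul_div_cancel_left₀ _ (show -M ≠ 0 by linarith)]
      linarith
    set A : ℝ := M * 𝓋 + h₁ with hA
    have hApos : 0 < A := by
      by_contra hAle
      push_neg at hAle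
      have h1A : 1 / A ≤ 0 := one_div_nonpos.mpr hAle
      have h2 : min 1 (1 / A) ≤ 0 := le_trans (min_le_right _ _) h1A
      nlinarith
    have hεA : ε * A ≤ μ / 2 := by
      have h1 : ε ≤ (μ / 2) * (1 / A) := by
        have h2 : min 1 (1 / A) ≤ 1 / A := min_le_right _ _
        nlinarith
      calc ε * A ≤ ((μ / 2) * (1 / A)) * A := by nlinarith
        _ = μ / 2 := by field_simp
    -- set-up
    set w : ℝ → E n := fun s => deriv v s - η • XH H (v s) with hw
    have hderivc : Continuous (deriv v) := hv.1.continuous_deriv (by simp)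
    have hgradc : Continuous (fun s => gradient H (v s)) :=
      (continuous_gradient' H hH).comp hvC
    have hwc : Continuous w :=
      hderivc.sub
        ((hgradc.const_smul Complex.I).const_smul η :
          Continuous fun s => η • (Complex.I • gradient H (v s)))
    set G' : ℝ → ℝ := fun s => ⟪gradient H (v s), deriv v s⟫ with hG'
    have hG'c : Continuous G' := hgradc.inner hderivc
    have hder : ∀ s : ℝ, HasDerivAt (fun u => H (v u)) (G' s) s := by
      intro s
      have hvd : HasDerivAt v (deriv v s) s := (hv.1.differentiable (by simp) s).hasDerivAt
      have hHd := (hH.differentiable (by simp) (v s)).hasFDerivAt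
      have := hHd.comp_hasDerivAt s hvd
      rwa [fderiv_eq_inner_gradient] at this
    have hG'bound : ∀ s, |G' s| ≤ ‖gradient H (v s)‖ * ‖w s‖ := by
      intro s
      have heq : G' s = ⟪gradient H (v s), w s⟫ := by
        show ⟪gradient H (v s), deriv v s⟫ = ⟪gradient H (v s), deriv v s - η • XH H (v s)⟫
        rw [inner_sub_right, inner_grad_XH, sub_zero]
      rw [heq]
      exact abs_real_inner_le_norm _ _
    set a : ℝ := ε / A with ha
    have hapos : 0 < a := div_pos hε0 hApos
    have key : ∀ X Y : ℝ, X * Y ≤ a / 2 * X ^ 2 + 1 / (2 * a) * Y ^ 2 := by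
      intro X Y
      rw [← sub_nonneg]
      have heq : a / 2 * X ^ 2 + 1 / (2 * a) * Y ^ 2 - X * Y = (a * X - Y) ^ 2 / (2 * a) := by
        field_simp
        ring
      rw [heq]
      positivity
    have hpt : ∀ s, |G' s| ≤ a / 2 * (h₁ + M * ‖v s‖) ^ 2 + 1 / (2 * a) * ‖w s‖ ^ 2 := by
      intro s
      have h1 : ‖gradient H (v s)‖ * ‖w s‖ ≤ (h₁ + M * ‖v s‖) * ‖w s‖ :=
        mul_le_mul_of_nonneg_right (hgb (v s)) (norm_nonneg _)
      exact le_trans (hG'bound s) (le_trans h1 (key _ _))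
    -- integrability facts
    have hvnC : Continuous fun s => ‖v s‖ := hvC.norm
    have hvn2C : Continuous fun s => ‖v s‖ ^ 2 := hvnC.pow 2
    have hwn2C : Continuous fun s => ‖w s‖ ^ 2 := (hwc.norm).pow 2
    have hPC : Continuous fun s => (h₁ + M * ‖v s‖) ^ 2 :=
      ((continuous_const.add (continuous_const.mul hvnC)).pow 2)
    -- ∫‖v‖² ≤ 𝓋²
    have hIv2nonneg : 0 ≤ ∫ s in (0:ℝ)..1, ‖v s‖ ^ 2 :=
      intervalIntegral.integral_nonneg zero_le_one (fun s _ => sq_nonneg _)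
    have hIv2 : ∫ s in (0:ℝ)..1, ‖v s‖ ^ 2 ≤ 𝓋 ^ 2 := by
      have heq : ∫ s in (0:ℝ)..1, ‖v s‖ ^ 2 = (L2 v) ^ 2 := (Real.sq_sqrt hIv2nonneg).symm
      rw [heq]
      exact pow_le_pow_left₀ (Real.sqrt_nonneg _) hL2v 2
    -- ∫‖v‖ ≤ 𝓋
    have hIv1 : ∫ s in (0:ℝ)..1, ‖v s‖ ≤ 𝓋 := by
      have hpt' : ∀ s ∈ Icc (0:ℝ) 1, ‖v s‖ ≤ 𝓋 / 2 + 1 / (2 * 𝓋) * ‖v s‖ ^ 2 := by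
        intro s _
        rw [← sub_nonneg]
        have heq : 𝓋 / 2 + 1 / (2 * 𝓋) * ‖v s‖ ^ 2 - ‖v s‖ = (‖v s‖ - 𝓋) ^ 2 / (2 * 𝓋) := by
          field_simp
          ring
        rw [heq]
        positivity
      have h1 : ∫ s in (0:ℝ)..1, ‖v s‖ ≤ ∫ s in (0:ℝ)..1, (𝓋 / 2 + 1 / (2 * 𝓋) * ‖v s‖ ^ 2) :=
        intervalIntegral.integral_mono_on zero_le_one (hvnC.intervalIntegrable 0 1)
          ((continuous_const.add (continuous_const.mul hvn2C)).intervalIntegrable 0 1) hpt'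
      have h2 : ∫ s in (0:ℝ)..1, (𝓋 / 2 + 1 / (2 * 𝓋) * ‖v s‖ ^ 2)
          = 𝓋 / 2 + 1 / (2 * 𝓋) * ∫ s in (0:ℝ)..1, ‖v s‖ ^ 2 := by
        rw [intervalIntegral.integral_add intervalIntegrable_const
          ((hvn2C.const_mul _).intervalIntegrable 0 1),
          intervalIntegral.integral_const, intervalIntegral.integral_const_mul]
        simp
      rw [h2] at h1
      have h3 : 1 / (2 * 𝓋) * ∫ s in (0:ℝ)..1, ‖v s‖ ^ 2 ≤ 1 / (2 * 𝓋) * 𝓋 ^ 2 := by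
        apply mul_le_mul_of_nonneg_left hIv2
        positivity
      have h4 : 1 / (2 * 𝓋) * 𝓋 ^ 2 = 𝓋 / 2 := by field_simp
      linarith
    -- ∫‖w‖² < ε²
    have hL2w : L2 w < ε := by
      have hg2 : L2 w + |∫ s in (0:ℝ)..1, H (v s)| < ε := hgrad
      linarith [abs_nonneg (∫ s in (0:ℝ)..1, H (v s))]
    have hIw2nonneg : 0 ≤ ∫ s in (0:ℝ)..1, ‖w s‖ ^ 2 :=
      intervalIntegral.integral_nonneg zero_le_one (fun s _ => sq_nonneg _)
    have hIw2 : ∫ s in (0:ℝ)..1, ‖w s‖ ^ 2 < ε ^ 2 := by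
      have heq : ∫ s in (0:ℝ)..1, ‖w s‖ ^ 2 = (L2 w) ^ 2 := (Real.sq_sqrt hIw2nonneg).symm
      rw [heq]
      exact pow_lt_pow_left₀ hL2w (Real.sqrt_nonneg _) two_ne_zero
    -- ∫(h₁+M‖v‖)² ≤ A²
    have hIP : ∫ s in (0:ℝ)..1, (h₁ + M * ‖v s‖) ^ 2 ≤ A ^ 2 := by
      have hexp : ∀ s : ℝ, (h₁ + M * ‖v s‖) ^ 2
          = h₁ ^ 2 + (2 * h₁ * M * ‖v s‖ + M ^ 2 * ‖v s‖ ^ 2) := fun s => by ring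
      have h1 : ∫ s in (0:ℝ)..1, (h₁ + M * ‖v s‖) ^ 2
          = h₁ ^ 2 + (2 * h₁ * M * (∫ s in (0:ℝ)..1, ‖v s‖)
              + M ^ 2 * ∫ s in (0:ℝ)..1, ‖v s‖ ^ 2) := by
        simp only [hexp]
        rw [intervalIntegral.integral_add intervalIntegrable_const
          ((show Continuous fun s => 2 * h₁ * M * ‖v s‖ + M ^ 2 * ‖v s‖ ^ 2 from
            (hvnC.const_mul (2 * h₁ * M)).add (hvn2C.const_mul (M ^ 2))).intervalIntegrable 0 1),
          intervalIntegral.integral_add ((hvnC.const_mul _).intervalIntegrable 0 1)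
            ((hvn2C.const_mul _).intervalIntegrable 0 1),
          intervalIntegral.integral_const, intervalIntegral.integral_const_mul,
          intervalIntegral.integral_const_mul]
        norm_num
      rw [h1, hA]
      have hIv1nonneg : 0 ≤ ∫ s in (0:ℝ)..1, ‖v s‖ :=
        intervalIntegral.integral_nonneg zero_le_one (fun s _ => norm_nonneg _)
      nlinarith [mul_nonneg hh₁ hM]
    -- FTC and variation bound
    have hFTC : ∫ s in t₀..t, G' s = H (v t) - H (v t₀) :=
      intervalIntegral.integral_eq_sub_of_hasDerivAt (fun s _ => hder s)
        (hG'c.intervalIntegrable _ _)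
    have hsub : Set.uIoc t₀ t ⊆ Set.uIoc (0:ℝ) 1 := by
      rw [Set.uIoc_of_le zero_le_one]
      intro s hs
      rcases le_total t₀ t with hle | hle
      · rw [Set.uIoc_of_le hle] at hs
        exact ⟨lt_of_le_of_lt ht₀.1 hs.1, hs.2.trans ht.2⟩
      · rw [Set.uIoc_comm, Set.uIoc_of_le hle] at hs
        exact ⟨lt_of_le_of_lt ht.1 hs.1, hs.2.trans ht₀.2⟩
    have hvar : |H (v t) - H (v t₀)| ≤ ∫ s in (0:ℝ)..1, |G' s| := by
      rw [← hFTC]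
      calc |∫ s in t₀..t, G' s| ≤ |(∫ s in t₀..t, |G' s|)| := by
            simpa using intervalIntegral.norm_integral_le_abs_integral_norm
              (f := G') (a := t₀) (b := t)
        _ ≤ |(∫ s in (0:ℝ)..1, |G' s|)| := by
            apply intervalIntegral.abs_integral_mono_interval hsub
            · exact Filter.Eventually.of_forall fun s => abs_nonneg _
            · exact hG'c.abs.intervalIntegrable 0 1
        _ = ∫ s in (0:ℝ)..1, |G' s| :=
            abs_of_nonneg (intervalIntegral.integral_nonneg zero_le_one fun s _ => abs_nonneg _)
    have hIabs : ∫ s in (0:ℝ)..1, |G' s|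
        ≤ a / 2 * A ^ 2 + 1 / (2 * a) * ∫ s in (0:ℝ)..1, ‖w s‖ ^ 2 := by
      have h1 : ∫ s in (0:ℝ)..1, |G' s|
          ≤ ∫ s in (0:ℝ)..1, (a / 2 * (h₁ + M * ‖v s‖) ^ 2 + 1 / (2 * a) * ‖w s‖ ^ 2) :=
        intervalIntegral.integral_mono_on zero_le_one (hG'c.abs.intervalIntegrable 0 1)
          (((continuous_const.mul hPC).add (continuous_const.mul hwn2C)).intervalIntegrable 0 1)
          (fun s _ => hpt s)
      have h2 : ∫ s in (0:ℝ)..1, (a / 2 * (h₁ + M * ‖v s‖) ^ 2 + 1 / (2 * a) * ‖w s‖ ^ 2)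
          = a / 2 * (∫ s in (0:ℝ)..1, (h₁ + M * ‖v s‖) ^ 2)
            + 1 / (2 * a) * ∫ s in (0:ℝ)..1, ‖w s‖ ^ 2 := by
        rw [intervalIntegral.integral_add ((hPC.const_mul _).intervalIntegrable 0 1)
          ((hwn2C.const_mul _).intervalIntegrable 0 1),
          intervalIntegral.integral_const_mul, intervalIntegral.integral_const_mul]
      rw [h2] at h1
      have h3 : a / 2 * (∫ s in (0:ℝ)..1, (h₁ + M * ‖v s‖) ^ 2) ≤ a / 2 * A ^ 2 := by
        apply mul_le_mul_of_nonneg_left hIP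
        positivity
      linarith
    have hfin : |H (v t) - H (v t₀)| < μ / 2 := by
      have h5 : 1 / (2 * a) * ∫ s in (0:ℝ)..1, ‖w s‖ ^ 2 < 1 / (2 * a) * ε ^ 2 := by
        apply mul_lt_mul_of_pos_left hIw2
        positivity
      have h6 : a / 2 * A ^ 2 + 1 / (2 * a) * ε ^ 2 = ε * A := by
        rw [ha]
        field_simp
        ring
      linarith
    have habsadd : |H (v t)| ≤ |H (v t₀)| + |H (v t) - H (v t₀)| := by
      calc |H (v t)| = |H (v t₀) + (H (v t) - H (v t₀))| := by ring_nf
        _ ≤ |H (v t₀)| + |H (v t) - H (v t₀)| := abs_add_le _ _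
    linarith
end
end

section
/- Quadratic Taylor remainder of the action gradient at a constant critical point (Lemma 5.1): Let H:ℝ^{2n}→ℝ be C² with sup_x‖Hess_xH‖≤M. Let v̄∈ℝ^{2n} with H(v̄)=0, let v be a loop and η∈ℝ, and set ξ:=v−v̄. Then the remainder 𝒪:=∇𝒜^H(v,η)−∇²_{(v̄,0)}𝒜^H(ξ,η) equals (ηJ₀(X^H(v)−X^H(v̄)), −∫₀¹(H(v(t))−dH_{v̄}(v(t)−v̄))dt), and it satisfies ‖ηJ₀(X^H(v)−X^H(v̄))‖_{L²} + |∫₀¹(H(v(t))−dH_{v̄}(v(t)−v̄))dt| ≤ ½M(‖v−v̄‖_{L²}+|η|)². -/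
open MeasureTheory intervalIntegral Set
open scoped RealInnerProductSpace Topology

noncomputable section

lemma fderiv2_bound {n : ℕ} (H : E n → ℝ) (M : ℝ)
    (hM : ∀ x, ‖iteratedFDeriv ℝ 2 H x‖ ≤ M) (x : E n) :
    ‖fderiv ℝ (fderiv ℝ H) x‖ ≤ M := by
  have hM0 : 0 ≤ M := le_trans (norm_nonneg _) (hM x)
  refine ContinuousLinearMap.opNorm_le_bound _ hM0 fun u => ?_
  refine ContinuousLinearMap.opNorm_le_bound _ (by positivity) fun w => ?_
  have h1 : fderiv ℝ (fderiv ℝ H) x u w = iteratedFDeriv ℝ 2 H x ![u, w] := by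
    rw [iteratedFDeriv_two_apply]; simp
  rw [h1]
  calc ‖iteratedFDeriv ℝ 2 H x ![u, w]‖ ≤ ‖iteratedFDeriv ℝ 2 H x‖ * (‖u‖ * ‖w‖) := by
        simpa [Fin.prod_univ_two] using (iteratedFDeriv ℝ 2 H x).le_opNorm ![u, w]
    _ ≤ M * (‖u‖ * ‖w‖) := mul_le_mul_of_nonneg_right (hM x) (by positivity)
    _ = M * ‖u‖ * ‖w‖ := by ring

lemma fderiv_lip {n : ℕ} (H : E n → ℝ) (hH : ContDiff ℝ 2 H) (M : ℝ)
    (hM : ∀ x, ‖iteratedFDeriv ℝ 2 H x‖ ≤ M) (x y : E n) :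
    ‖fderiv ℝ H x - fderiv ℝ H y‖ ≤ M * ‖x - y‖ := by
  have hd : ∀ z : E n, DifferentiableAt ℝ (fderiv ℝ H) z := fun z =>
    ((hH.fderiv_right (m := 1) (by norm_num)).differentiable one_ne_zero).differentiableAt
  exact convex_univ.norm_image_sub_le_of_norm_fderiv_le (fun z _ => hd z)
    (fun z _ => fderiv2_bound H M hM z) (mem_univ y) (mem_univ x)

lemma grad_lip {n : ℕ} (H : E n → ℝ) (hH : ContDiff ℝ 2 H) (M : ℝ)
    (hM : ∀ x, ‖iteratedFDeriv ℝ 2 H x‖ ≤ M) (x y : E n) :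
    ‖gradient H x - gradient H y‖ ≤ M * ‖x - y‖ := by
  have : gradient H x - gradient H y
      = (InnerProductSpace.toDual ℝ (E n)).symm (fderiv ℝ H x - fderiv ℝ H y) := by
    simp [gradient, map_sub]
  rw [this, LinearIsometryEquiv.norm_map]
  exact fderiv_lip H hH M hM x y

lemma taylor_bound {n : ℕ} (H : E n → ℝ) (hH : ContDiff ℝ 2 H) (M : ℝ)
    (hM : ∀ x, ‖iteratedFDeriv ℝ 2 H x‖ ≤ M) (vb x : E n) :
    |H x - H vb - fderiv ℝ H vb (x - vb)| ≤ M / 2 * ‖x - vb‖ ^ 2 := by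
  set ξ := x - vb with hξ
  set c : ℝ → E n := fun t => vb + t • ξ with hc
  have hcx : c 1 = x := by simp [hc, hξ]
  have hc0 : c 0 = vb := by simp [hc]
  have hccont : Continuous c := by continuity
  have hcd : ∀ t : ℝ, HasDerivAt c ξ t := fun t => by
    simpa [hc] using ((hasDerivAt_id t).smul_const ξ).const_add vb
  have hg : ∀ t : ℝ, HasDerivAt (fun s => H (c s)) (fderiv ℝ H (c t) ξ) t := fun t =>
    ((hH.differentiable two_ne_zero) (c t)).hasFDerivAt.comp_hasDerivAt t (hcd t)
  have hdercont : Continuous fun t => fderiv ℝ H (c t) ξ :=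
    ((hH.continuous_fderiv two_ne_zero).comp hccont).clm_apply continuous_const
  have hInt : IntervalIntegrable (fun t => fderiv ℝ H (c t) ξ) volume 0 1 :=
    hdercont.intervalIntegrable _ _
  have key : ∫ t in (0:ℝ)..1, fderiv ℝ H (c t) ξ = H x - H vb := by
    rw [intervalIntegral.integral_eq_sub_of_hasDerivAt (fun t _ => hg t) hInt, hcx, hc0]
  have key2 : H x - H vb - fderiv ℝ H vb ξ
      = ∫ t in (0:ℝ)..1, (fderiv ℝ H (c t) ξ - fderiv ℝ H vb ξ) := by
    rw [intervalIntegral.integral_sub hInt (intervalIntegrable_const), key]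
    simp
  have hpt : ∀ t ∈ Icc (0:ℝ) 1, |fderiv ℝ H (c t) ξ - fderiv ℝ H vb ξ| ≤ (M * ‖ξ‖ ^ 2) * t := by
    intro t ht
    have h1 : fderiv ℝ H (c t) ξ - fderiv ℝ H vb ξ = (fderiv ℝ H (c t) - fderiv ℝ H vb) ξ := by
      simp
    rw [h1, ← Real.norm_eq_abs]
    calc ‖(fderiv ℝ H (c t) - fderiv ℝ H vb) ξ‖
        ≤ ‖fderiv ℝ H (c t) - fderiv ℝ H vb‖ * ‖ξ‖ := ContinuousLinearMap.le_opNorm _ _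
      _ ≤ (M * ‖c t - vb‖) * ‖ξ‖ :=
          mul_le_mul_of_nonneg_right (fderiv_lip H hH M hM _ _) (norm_nonneg _)
      _ = (M * ‖ξ‖ ^ 2) * t := by
          have : ‖c t - vb‖ = t * ‖ξ‖ := by
            simp [hc, norm_smul, abs_of_nonneg ht.1]
          rw [this]; ring
  calc |H x - H vb - fderiv ℝ H vb ξ|
      = |∫ t in (0:ℝ)..1, (fderiv ℝ H (c t) ξ - fderiv ℝ H vb ξ)| := by rw [key2]
    _ ≤ ∫ t in (0:ℝ)..1, |fderiv ℝ H (c t) ξ - fderiv ℝ H vb ξ| :=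
        intervalIntegral.abs_integral_le_integral_abs zero_le_one
    _ ≤ ∫ t in (0:ℝ)..1, (M * ‖ξ‖ ^ 2) * t := by
        apply intervalIntegral.integral_mono_on zero_le_one
          ((hdercont.sub continuous_const).abs.intervalIntegrable _ _)
          ((continuous_const.mul continuous_id).intervalIntegrable _ _) hpt
    _ = M / 2 * ‖ξ‖ ^ 2 := by
        rw [intervalIntegral.integral_const_mul]
        simp [integral_id]
        ring

/-- **Lemma 5.1 (quadratic Taylor remainder of the action gradient at a constant
critical point).** -/
theorem taylor_remainder_of_action_gradient {n : ℕ} (H : E n → ℝ)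
    (hH : ContDiff ℝ 2 H) (M : ℝ) (hM : HessBound H M)
    (vb : E n) (hvb : H vb = 0) (v : ℝ → E n) (hv : IsLoop v) (η : ℝ) :
    -- the remainder equals (ηJ₀(X^H(v)−X^H(v̄)), −∫₀¹(H(v)−dH_{v̄}(v−v̄)))
    (∀ t, (-(J0 (deriv v t - η • XH H (v t))))
        - (-(J0 (deriv (fun τ => v τ - vb) t - η • XH H vb)))
      = η • J0 (XH H (v t) - XH H vb)) ∧
    ((-∫ t in (0:ℝ)..1, H (v t))
        - (-∫ t in (0:ℝ)..1, fderiv ℝ H vb (v t - vb))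
      = -∫ t in (0:ℝ)..1, (H (v t) - fderiv ℝ H vb (v t - vb))) ∧
    -- and it is quadratically small
    (L2 (fun t => η • J0 (XH H (v t) - XH H vb))
        + |∫ t in (0:ℝ)..1, (H (v t) - fderiv ℝ H vb (v t - vb))|
      ≤ (1 / 2) * M * (L2 (fun t => v t - vb) + |η|) ^ 2) := by
  have hcv : Continuous v := hv.1.continuous
  have hM0 : 0 ≤ M := le_trans (norm_nonneg _) (hM vb)
  have hgc : Continuous (gradient H) := by
    have : gradient H = fun x => (InnerProductSpace.toDual ℝ (E n)).symm (fderiv ℝ H x) := rfl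
    rw [this]
    exact (LinearIsometryEquiv.continuous _).comp (hH.continuous_fderiv two_ne_zero)
  have hXc : Continuous (fun t => XH H (v t)) := by
    have : (fun t => XH H (v t)) = fun t => Complex.I • gradient H (v t) := rfl
    rw [this]
    exact (hgc.comp hcv).const_smul Complex.I
  have hIξ : IntervalIntegrable (fun t => ‖v t - vb‖ ^ 2) volume 0 1 :=
    (((hcv.sub continuous_const).norm).pow 2).intervalIntegrable _ _
  have hintnn : 0 ≤ ∫ t in (0:ℝ)..1, ‖v t - vb‖ ^ 2 :=
    intervalIntegral.integral_nonneg zero_le_one (fun u _ => by positivity)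
  have ha0 : 0 ≤ L2 (fun t => v t - vb) := Real.sqrt_nonneg _
  have hL2sq : L2 (fun t => v t - vb) ^ 2 = ∫ t in (0:ℝ)..1, ‖v t - vb‖ ^ 2 :=
    Real.sq_sqrt hintnn
  refine ⟨?_, ?_, ?_⟩
  · intro t
    have hd : deriv (fun τ => v τ - vb) t = deriv v t := by
      simp [deriv_sub_const]
    rw [hd]
    simp only [J0, smul_sub, smul_comm Complex.I η]
    abel
  · have hInt1 : IntervalIntegrable (fun t => H (v t)) volume 0 1 :=
      (hH.continuous.comp hcv).intervalIntegrable _ _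
    have hInt2 : IntervalIntegrable (fun t => fderiv ℝ H vb (v t - vb)) volume 0 1 :=
      ((fderiv ℝ H vb).continuous.comp (hcv.sub continuous_const)).intervalIntegrable _ _
    rw [intervalIntegral.integral_sub hInt1 hInt2]
    ring
  · -- quantitative bound
    have hptA : ∀ t, ‖η • J0 (XH H (v t) - XH H vb)‖ ^ 2
        ≤ (|η| * M) ^ 2 * ‖v t - vb‖ ^ 2 := by
      intro t
      have h1 : ‖η • J0 (XH H (v t) - XH H vb)‖ = |η| * ‖gradient H (v t) - gradient H vb‖ := by
        have h2 : XH H (v t) - XH H vb = Complex.I • (gradient H (v t) - gradient H vb) := by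
          simp [XH, J0, smul_sub]
        rw [norm_smul, h2]
        simp [J0, norm_smul, Real.norm_eq_abs]
      have h3 : |η| * ‖gradient H (v t) - gradient H vb‖ ≤ |η| * (M * ‖v t - vb‖) :=
        mul_le_mul_of_nonneg_left (grad_lip H hH M hM _ _) (abs_nonneg _)
      calc ‖η • J0 (XH H (v t) - XH H vb)‖ ^ 2
          ≤ (|η| * (M * ‖v t - vb‖)) ^ 2 := by
            rw [h1]; exact pow_le_pow_left₀ (by positivity) h3 2
        _ = (|η| * M) ^ 2 * ‖v t - vb‖ ^ 2 := by ring
    have hIA : IntervalIntegrable (fun t => ‖η • J0 (XH H (v t) - XH H vb)‖ ^ 2) volume 0 1 := by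
      have : Continuous fun t => η • J0 (XH H (v t) - XH H vb) := by
        have : (fun t => η • J0 (XH H (v t) - XH H vb))
            = fun t => η • Complex.I • (XH H (v t) - XH H vb) := rfl
        rw [this]
        exact (((hXc.sub continuous_const).const_smul Complex.I).const_smul η)
      exact (this.norm.pow 2).intervalIntegrable _ _
    have hA : L2 (fun t => η • J0 (XH H (v t) - XH H vb)) ≤ |η| * M * L2 (fun t => v t - vb) := by
      have h1 : ∫ t in (0:ℝ)..1, ‖η • J0 (XH H (v t) - XH H vb)‖ ^ 2
          ≤ ∫ t in (0:ℝ)..1, (|η| * M) ^ 2 * ‖v t - vb‖ ^ 2 :=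
        intervalIntegral.integral_mono_on zero_le_one hIA (hIξ.const_mul _)
          (fun t _ => hptA t)
      calc L2 (fun t => η • J0 (XH H (v t) - XH H vb))
          ≤ Real.sqrt (∫ t in (0:ℝ)..1, (|η| * M) ^ 2 * ‖v t - vb‖ ^ 2) :=
            Real.sqrt_le_sqrt h1
        _ = |η| * M * L2 (fun t => v t - vb) := by
            rw [intervalIntegral.integral_const_mul, Real.sqrt_mul (by positivity),
              Real.sqrt_sq (by positivity)]
            rfl
    have hB : |∫ t in (0:ℝ)..1, (H (v t) - fderiv ℝ H vb (v t - vb))|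
        ≤ M / 2 * L2 (fun t => v t - vb) ^ 2 := by
      have hcont : Continuous fun t => H (v t) - fderiv ℝ H vb (v t - vb) :=
        (hH.continuous.comp hcv).sub
          ((fderiv ℝ H vb).continuous.comp (hcv.sub continuous_const))
      have hpt : ∀ t ∈ Icc (0:ℝ) 1, |H (v t) - fderiv ℝ H vb (v t - vb)|
          ≤ M / 2 * ‖v t - vb‖ ^ 2 := by
        intro t _
        have := taylor_bound H hH M hM vb (v t)
        simpa [hvb] using this
      calc |∫ t in (0:ℝ)..1, (H (v t) - fderiv ℝ H vb (v t - vb))|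
          ≤ ∫ t in (0:ℝ)..1, |H (v t) - fderiv ℝ H vb (v t - vb)| :=
            intervalIntegral.abs_integral_le_integral_abs zero_le_one
        _ ≤ ∫ t in (0:ℝ)..1, M / 2 * ‖v t - vb‖ ^ 2 :=
            intervalIntegral.integral_mono_on zero_le_one
              (hcont.abs.intervalIntegrable _ _) (hIξ.const_mul _) hpt
        _ = M / 2 * L2 (fun t => v t - vb) ^ 2 := by
            rw [intervalIntegral.integral_const_mul, hL2sq]
    calc L2 (fun t => η • J0 (XH H (v t) - XH H vb))
          + |∫ t in (0:ℝ)..1, (H (v t) - fderiv ℝ H vb (v t - vb))|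
        ≤ |η| * M * L2 (fun t => v t - vb) + M / 2 * L2 (fun t => v t - vb) ^ 2 :=
          add_le_add hA hB
      _ ≤ 1 / 2 * M * (L2 (fun t => v t - vb) + |η|) ^ 2 := by
          nlinarith [mul_nonneg hM0 (sq_nonneg |η|), abs_nonneg η, ha0]
end
end

section
/- Uniform lower bound for the Hessian of the action functional on the normal space (Lemma 5.3): Let H:ℝ^{2n}→ℝ be C¹ and v̄∈ℝ^{2n} with H(v̄)=0 and ‖∇H(v̄)‖≥1/2. Let ξ be a 1-periodic W^{1,2} loop in ℝ^{2n} and η∈ℝ such that ∫₀¹ξ(t)dt ∈ ℝ·∇H(v̄) (i.e. (ξ,η) lies in the normal space to the critical manifold Σ×{0}, Σ=H⁻¹(0), at (v̄,0)). Then ‖∂_tξ−ηX^H(v̄)‖_{L²} + |∫₀¹⟨∇H(v̄),ξ(t)⟩dt| ≥ (1/6)(‖ξ‖_{L²}+‖∂_tξ‖_{L²}+|η|); the left-hand side is the L²×ℝ-norm of the Hessian ∇²_{(v̄,0)}𝒜^H(ξ,η). -/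
open MeasureTheory intervalIntegral Set
open scoped RealInnerProductSpace Topology

noncomputable section

set_option maxHeartbeats 1000000

/-- **Lemma 5.3 (uniform lower bound for the Hessian of the action functional
on the normal space).** -/
theorem hessian_lower_bound_on_normal_space {n : ℕ} (H : E n → ℝ)
    (hH : ContDiff ℝ 1 H) (vb : E n) (h0 : H vb = 0)
    (hg : (1:ℝ) / 2 ≤ ‖gradient H vb‖)
    (ξ : ℝ → E n) (hξ : IsLoop ξ) (η : ℝ)
    (hnormal : ∃ c : ℝ, (∫ t in (0:ℝ)..1, ξ t) = c • gradient H vb) :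
    (1 / 6) * (L2 ξ + L2 (fun t => deriv ξ t) + |η|)
      ≤ L2 (fun t => deriv ξ t - η • XH H vb)
        + |∫ t in (0:ℝ)..1, (@inner ℝ _ _ (gradient H vb) (ξ t) : ℝ)| := by
  obtain ⟨hsm, hper⟩ := hξ
  obtain ⟨c, hc⟩ := hnormal
  set g : E n := gradient H vb with hgdef
  have hdiff : Differentiable ℝ ξ := hsm.differentiable (by simp)
  have hcd : Continuous (deriv ξ) := hsm.continuous_deriv (mod_cast le_top)
  have hcont : Continuous ξ := hsm.continuous
  -- the Hamiltonian vector field at vb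
  set w : E n := η • XH H vb with hwdef
  have hnw : ‖w‖ = |η| * ‖g‖ := by
    rw [hwdef, norm_smul, Real.norm_eq_abs]
    congr 1
    show ‖Complex.I • g‖ = ‖g‖
    rw [norm_smul]; simp
  -- integral of the derivative over a period vanishes
  have hξ10 : ξ 1 = ξ 0 := by simpa using hper 0
  have hintd : IntervalIntegrable (deriv ξ) volume 0 1 := hcd.intervalIntegrable 0 1
  have hder0 : (∫ t in (0:ℝ)..1, deriv ξ t) = 0 := by
    rw [intervalIntegral.integral_deriv_eq_sub (fun x _ => hdiff x) hintd, hξ10, sub_self]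
  -- cross term vanishes
  have hcross : (∫ t in (0:ℝ)..1, (@inner ℝ _ _ w (deriv ξ t) : ℝ)) = 0 := by
    have h := (innerSL ℝ w).intervalIntegral_comp_comm hintd
    simp only [innerSL_apply_apply] at h
    rw [h, hder0, inner_zero_right]
  -- expansion of the squared norm
  set D2 : ℝ := ∫ t in (0:ℝ)..1, ‖deriv ξ t‖ ^ 2 with hD2def
  have hD2nonneg : 0 ≤ D2 :=
    intervalIntegral.integral_nonneg zero_le_one (fun t _ => sq_nonneg _)
  have hintd2 : IntervalIntegrable (fun t => ‖deriv ξ t‖ ^ 2) volume 0 1 :=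
    ((hcd.norm.pow 2)).intervalIntegrable 0 1
  have hintcr : IntervalIntegrable (fun t => (@inner ℝ _ _ w (deriv ξ t) : ℝ)) volume 0 1 :=
    ((innerSL ℝ w).continuous.comp hcd).intervalIntegrable 0 1
  have hexp : (∫ t in (0:ℝ)..1, ‖deriv ξ t - w‖ ^ 2) = D2 + ‖w‖ ^ 2 := by
    have hpt : ∀ t : ℝ, ‖deriv ξ t - w‖ ^ 2
        = ‖deriv ξ t‖ ^ 2 - 2 * (@inner ℝ _ _ w (deriv ξ t) : ℝ) + ‖w‖ ^ 2 := by
      intro t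
      rw [norm_sub_sq_real, real_inner_comm]
    rw [intervalIntegral.integral_congr (fun t _ => hpt t)]
    rw [intervalIntegral.integral_add ((hintd2.sub ((hintcr.const_mul 2)))) intervalIntegrable_const,
      intervalIntegral.integral_sub hintd2 (hintcr.const_mul 2),
      intervalIntegral.integral_const_mul, hcross, intervalIntegral.integral_const]
    simp [hD2def]
  -- A := L2 of the Hessian first component
  have hA : L2 (fun t => deriv ξ t - η • XH H vb) = Real.sqrt (D2 + ‖w‖ ^ 2) := by
    rw [L2, hexp]
  set A : ℝ := Real.sqrt (D2 + ‖w‖ ^ 2) with hAdef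
  have hAnonneg : 0 ≤ A := Real.sqrt_nonneg _
  have hDA : Real.sqrt D2 ≤ A := Real.sqrt_le_sqrt (by nlinarith [sq_nonneg ‖w‖])
  have hwA : |η| * ‖g‖ ≤ A := by
    have h : ‖w‖ ≤ A := Real.le_sqrt_of_sq_le (by linarith)
    rw [hnw] at h; exact h
  have hetaA : |η| ≤ 2 * A := by
    nlinarith [abs_nonneg η, hwA]
  -- B := the zero-order term
  have hBval : (∫ t in (0:ℝ)..1, (@inner ℝ _ _ g (ξ t) : ℝ)) = c * ‖g‖ ^ 2 := by
    have h := (innerSL ℝ g).intervalIntegral_comp_comm (hcont.intervalIntegrable (μ := volume) 0 1)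
    simp only [innerSL_apply_apply] at h
    rw [h, hc, real_inner_smul_right, real_inner_self_eq_norm_sq]
  set B : ℝ := |∫ t in (0:ℝ)..1, (@inner ℝ _ _ g (ξ t) : ℝ)| with hBdef
  have hBnonneg : 0 ≤ B := abs_nonneg _
  have hB : B = |c| * ‖g‖ ^ 2 := by
    rw [hBdef, hBval, abs_mul, abs_of_nonneg (by positivity : (0:ℝ) ≤ ‖g‖ ^ 2)]
  -- the mean value
  set m : E n := ∫ t in (0:ℝ)..1, ξ t with hmdef
  have hmB : ‖m‖ ≤ 2 * B := by
    have h1 : ‖m‖ = |c| * ‖g‖ := by rw [hc, norm_smul, Real.norm_eq_abs]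
    rw [h1, hB]
    nlinarith [abs_nonneg c, norm_nonneg g]
  -- I := integral of the norm of the derivative
  set I : ℝ := ∫ t in (0:ℝ)..1, ‖deriv ξ t‖ with hIdef
  have hInonneg : 0 ≤ I := intervalIntegral.integral_nonneg zero_le_one (fun t _ => norm_nonneg _)
  have hintnd : IntervalIntegrable (fun t => ‖deriv ξ t‖) volume 0 1 :=
    hcd.norm.intervalIntegrable 0 1
  -- pointwise bound from the fundamental theorem of calculus
  have hpt : ∀ t ∈ Set.Icc (0:ℝ) 1, ‖ξ t - ξ 0‖ ≤ I := by
    intro t ht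
    have hftc : ξ t - ξ 0 = ∫ s in (0:ℝ)..t, deriv ξ s := by
      rw [intervalIntegral.integral_deriv_eq_sub (fun x _ => hdiff x)
        (hcd.intervalIntegrable 0 t)]
    rw [hftc]
    calc ‖∫ s in (0:ℝ)..t, deriv ξ s‖ ≤ ∫ s in (0:ℝ)..t, ‖deriv ξ s‖ :=
          intervalIntegral.norm_integral_le_integral_norm ht.1
      _ ≤ I := intervalIntegral.integral_mono_interval le_rfl ht.1 ht.2
          (Filter.Eventually.of_forall (fun s => norm_nonneg _)) hintnd
  -- bound on ‖ξ 0 - m‖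
  have h0m : ‖ξ 0 - m‖ ≤ I := by
    have hsub : ξ 0 - m = ∫ t in (0:ℝ)..1, (ξ 0 - ξ t) := by
      rw [intervalIntegral.integral_sub intervalIntegrable_const (hcont.intervalIntegrable 0 1)]
      rw [intervalIntegral.integral_const]
      simp [hmdef]
    rw [hsub]
    calc ‖∫ t in (0:ℝ)..1, (ξ 0 - ξ t)‖ ≤ ∫ t in (0:ℝ)..1, ‖ξ 0 - ξ t‖ :=
          intervalIntegral.norm_integral_le_integral_norm zero_le_one
      _ ≤ ∫ t in (0:ℝ)..1, I := by
          apply intervalIntegral.integral_mono_on zero_le_one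
            ((continuous_const.sub hcont).norm.intervalIntegrable 0 1) intervalIntegrable_const
          intro t ht
          rw [Pi.sub_apply, norm_sub_rev]
          exact hpt t ht
      _ = I := by simp
  -- pointwise bound on ‖ξ t‖
  have hptxi : ∀ t ∈ Set.Icc (0:ℝ) 1, ‖ξ t‖ ≤ ‖m‖ + 2 * I := by
    intro t ht
    have h1 : ‖ξ t‖ ≤ ‖ξ t - ξ 0‖ + ‖ξ 0 - m‖ + ‖m‖ := by
      have := norm_add₃_le (a := ξ t - ξ 0) (b := ξ 0 - m) (c := m)
      simpa using this
    linarith [hpt t ht]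
  -- L2 bound on ξ
  have hL2ξ : L2 ξ ≤ ‖m‖ + 2 * I := by
    have hconst : 0 ≤ ‖m‖ + 2 * I := by positivity
    have hintsq : (∫ t in (0:ℝ)..1, ‖ξ t‖ ^ 2) ≤ (‖m‖ + 2 * I) ^ 2 := by
      calc (∫ t in (0:ℝ)..1, ‖ξ t‖ ^ 2) ≤ ∫ t in (0:ℝ)..1, (‖m‖ + 2 * I) ^ 2 := by
            apply intervalIntegral.integral_mono_on zero_le_one
              ((hcont.norm.pow 2).intervalIntegrable 0 1) intervalIntegrable_const
            intro t ht
            exact pow_le_pow_left₀ (norm_nonneg _) (hptxi t ht) 2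
        _ = (‖m‖ + 2 * I) ^ 2 := by simp
    rw [L2]
    calc Real.sqrt (∫ t in (0:ℝ)..1, ‖ξ t‖ ^ 2) ≤ Real.sqrt ((‖m‖ + 2 * I) ^ 2) :=
          Real.sqrt_le_sqrt hintsq
      _ = ‖m‖ + 2 * I := Real.sqrt_sq hconst
  -- Cauchy–Schwarz : I ≤ sqrt D2
  have hI2 : I ^ 2 ≤ D2 := by
    have key : 0 ≤ ∫ t in (0:ℝ)..1, (‖deriv ξ t‖ - I) ^ 2 :=
      intervalIntegral.integral_nonneg zero_le_one (fun t _ => sq_nonneg _)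
    have expand : (∫ t in (0:ℝ)..1, (‖deriv ξ t‖ - I) ^ 2)
        = D2 - 2 * I * I + I ^ 2 := by
      have hpt2 : ∀ t : ℝ, (‖deriv ξ t‖ - I) ^ 2
          = ‖deriv ξ t‖ ^ 2 - 2 * I * ‖deriv ξ t‖ + I ^ 2 := by intro t; ring
      rw [intervalIntegral.integral_congr (fun t _ => hpt2 t)]
      rw [intervalIntegral.integral_add (hintd2.sub (hintnd.const_mul _))
        intervalIntegrable_const,
        intervalIntegral.integral_sub hintd2 (hintnd.const_mul _),
        intervalIntegral.integral_const_mul, intervalIntegral.integral_const]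
      simp [hD2def, hIdef]
    nlinarith
  have hID : I ≤ Real.sqrt D2 := (Real.le_sqrt hInonneg hD2nonneg).mpr hI2
  -- L2 of the derivative
  have hL2d : L2 (fun t => deriv ξ t) = Real.sqrt D2 := rfl
  -- assemble everything
  rw [hA, hL2d]
  show (1 / 6) * (L2 ξ + Real.sqrt D2 + |η|) ≤ A + B
  have h1 : L2 ξ ≤ 2 * B + 2 * A := by
    have : Real.sqrt D2 ≤ A := hDA
    linarith [hL2ξ, hmB, hID]
  linarith [hDA, hetaA, hAnonneg, hBnonneg]
end
end

section
/- Small energy levels lie close to the zero level set (Lemma A.1): Let H:ℝ^{2n}→ℝ be smooth, satisfying (H1) with constants c₁,c₂,c₃ and (H3) with constants c₄,c₅,ν. Then for every δ>0 there exists μ=μ(δ,H)>0 such that H⁻¹((−μ,μ)) ⊆ {x∈ℝ^{2n} : dist(x,H⁻¹(0))<δ}. -/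
open MeasureTheory intervalIntegral Set
open scoped RealInnerProductSpace Topology

noncomputable section

private lemma fd_eq_inner' {F : Type*} [NormedAddCommGroup F] [InnerProductSpace ℝ F]
    [CompleteSpace F] (H : F → ℝ) (y v : F) :
    fderiv ℝ H y v = @inner ℝ _ _ (gradient H y) v := by
  rw [gradient, ← InnerProductSpace.toDual_apply_apply,
    (InnerProductSpace.toDual ℝ F).apply_symm_apply]

private lemma deriv_nonneg_of_right_min' {k : ℝ → ℝ} {D : ℝ} (hk : HasDerivAt k D 0)
    (h : ∀ᶠ t in nhdsWithin (0:ℝ) (Ioi 0), k 0 ≤ k t) : 0 ≤ D := by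
  have h1 : Filter.Tendsto (slope k 0) (nhdsWithin (0:ℝ) (Ioi 0)) (nhds D) := by
    have h2 := (hk.hasDerivWithinAt (s := Ioi (0:ℝ)))
    rw [hasDerivWithinAt_iff_tendsto_slope] at h2
    simpa [Set.diff_singleton_eq_self (fun h => lt_irrefl (0:ℝ) h)] using h2
  refine ge_of_tendsto h1 ?_
  filter_upwards [h, self_mem_nhdsWithin] with t ht ht'
  have htpos : (0:ℝ) < t := ht'
  rw [slope_def_field, sub_zero]
  have : 0 ≤ k t - k 0 := by linarith
  positivity

private lemma quad_absurd' (m c r : ℝ) (hm : 0 < m) (hc : c ≤ m / 2) (hr : m ≤ r)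
    (h : 0 ≤ -r ^ 2 + c * r) : False := by nlinarith

private lemma grad_lower_bound' {n : ℕ} (H : E n → ℝ)
    (c₁ c₂ c₃ c₄ c₅ ν : ℝ)
    (hc₁ : 0 < c₁) (hc₂ : 0 < c₂) (hc₃ : 0 ≤ c₃) (hc₄ : 0 < c₄) (hc₅ : 0 < c₅)
    (h1 : SatH1 H c₁ c₂ c₃) (h3 : SatH3 H c₄ c₅ ν) :
    ∃ m₀ : ℝ, 0 < m₀ ∧ ∀ y : E n, H y ∈ Ioo (-ν) ν → m₀ ≤ ‖gradient H y‖ := by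
  obtain ⟨X₁, -, -, hX₁b, hX₁l⟩ := h1
  obtain ⟨X₃, -, hX₃b, hX₃l⟩ := h3
  set R : ℝ := max 1 (Real.sqrt (2 * c₃ / c₂)) with hR
  have hR1 : (1:ℝ) ≤ R := le_max_left _ _
  have hR0 : (0:ℝ) < R := lt_of_lt_of_le one_pos hR1
  have hRc : c₃ ≤ c₂ * R ^ 2 / 2 := by
    have h := Real.sq_sqrt (by positivity : (0:ℝ) ≤ 2 * c₃ / c₂)
    have h2 : Real.sqrt (2 * c₃ / c₂) ≤ R := le_max_right _ _
    have h3 : (2 * c₃ / c₂) ≤ R ^ 2 := by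
      nlinarith [Real.sqrt_nonneg (2 * c₃ / c₂)]
    rw [div_le_iff₀ hc₂] at h3
    nlinarith
  refine ⟨min (c₂ * R / (4 * c₁)) (c₅ / (c₄ * (R ^ 2 + 1))), by positivity, ?_⟩
  intro y hy
  have hg0 : (0:ℝ) ≤ ‖gradient H y‖ := norm_nonneg _
  rcases le_total ‖y‖ R with hyR | hyR
  · refine le_trans (min_le_right _ _) ?_
    have hfd : c₅ ≤ fderiv ℝ H y (X₃ y) := hX₃l y hy
    rw [fd_eq_inner'] at hfd
    have hCS : @inner ℝ _ _ (gradient H y) (X₃ y) ≤ ‖gradient H y‖ * ‖X₃ y‖ :=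
      real_inner_le_norm _ _
    have hXb : ‖X₃ y‖ ≤ c₄ * (R ^ 2 + 1) := by
      have h4 := hX₃b y hy
      have hsq : ‖y‖ ^ 2 ≤ R ^ 2 := by nlinarith [norm_nonneg y]
      nlinarith
    rw [div_le_iff₀ (by positivity)]
    nlinarith [norm_nonneg (X₃ y)]
  · refine le_trans (min_le_left _ _) ?_
    have hfd : c₂ * ‖y‖ ^ 2 - c₃ ≤ fderiv ℝ H y (X₁ y) := hX₁l y
    rw [fd_eq_inner'] at hfd
    have hCS : @inner ℝ _ _ (gradient H y) (X₁ y) ≤ ‖gradient H y‖ * ‖X₁ y‖ :=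
      real_inner_le_norm _ _
    have hXb := hX₁b y
    have hy1 : (1:ℝ) ≤ ‖y‖ := le_trans hR1 hyR
    have key : c₂ * ‖y‖ ^ 2 / 2 ≤ ‖gradient H y‖ * (c₁ * (‖y‖ + 1)) := by
      have hstep : ‖gradient H y‖ * ‖X₁ y‖ ≤ ‖gradient H y‖ * (c₁ * (‖y‖ + 1)) :=
        mul_le_mul_of_nonneg_left hXb hg0
      have hsq : R ^ 2 ≤ ‖y‖ ^ 2 := by nlinarith
      have h6 : c₂ * R ^ 2 ≤ c₂ * ‖y‖ ^ 2 := mul_le_mul_of_nonneg_left hsq hc₂.le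
      linarith
    have key2 : c₂ * ‖y‖ ^ 2 ≤ ‖gradient H y‖ * (4 * c₁) * ‖y‖ := by
      nlinarith [mul_le_mul_of_nonneg_left (show ‖y‖ + 1 ≤ 2 * ‖y‖ by linarith)
        (mul_nonneg hg0 hc₁.le)]
    have key3 : c₂ * R * ‖y‖ ≤ ‖gradient H y‖ * (4 * c₁) * ‖y‖ := by
      nlinarith [mul_le_mul_of_nonneg_left hyR (mul_nonneg hc₂.le (norm_nonneg y))]
    have hy0 : (0:ℝ) < ‖y‖ := lt_of_lt_of_le one_pos hy1
    have := le_of_mul_le_mul_right (by linarith : c₂ * R * ‖y‖ ≤ ‖gradient H y‖ * (4 * c₁) * ‖y‖) hy0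
    rw [div_le_iff₀ (by positivity)]
    linarith


/-- **Lemma A.1 (small energy levels lie close to the zero level set).** -/
theorem small_levels_close_to_zero_level {n : ℕ} (H : E n → ℝ) (hH : ContDiff ℝ (⊤ : ℕ∞) H)
    (c₁ c₂ c₃ c₄ c₅ ν : ℝ)
    (hc₁ : 0 < c₁) (hc₂ : 0 < c₂) (hc₃ : 0 ≤ c₃)
    (hc₄ : 0 < c₄) (hc₅ : 0 < c₅) (hν : 0 < ν)
    (h1 : SatH1 H c₁ c₂ c₃) (h3 : SatH3 H c₄ c₅ ν) :
    ∀ δ : ℝ, 0 < δ → ∃ μ : ℝ, 0 < μ ∧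
      H ⁻¹' Ioo (-μ) μ ⊆ {x : E n | Metric.infDist x (H ⁻¹' {0}) < δ} := by
  intro δ hδ
  obtain ⟨m₀, hm₀, hgrad⟩ := grad_lower_bound' H c₁ c₂ c₃ c₄ c₅ ν hc₁ hc₂ hc₃ hc₄ hc₅ h1 h3
  refine ⟨min (ν/2) (m₀ * δ / 4), by positivity, ?_⟩
  set μ : ℝ := min (ν/2) (m₀ * δ / 4) with hμdef
  have hμ0 : 0 < μ := by positivity
  have hμν : μ ≤ ν/2 := min_le_left _ _
  have hμm : μ ≤ m₀ * δ / 4 := min_le_right _ _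
  intro x hx
  simp only [mem_preimage, mem_Ioo] at hx
  have hHx : |H x| < μ := abs_lt.2 ⟨by linarith [hx.1], hx.2⟩
  set c : ℝ := 2 * μ / δ with hcdef
  have hc0 : 0 < c := by positivity
  set g : E n → ℝ := fun z => |H z| + c * ‖z - x‖ with hgdef
  have hgc : Continuous g := by
    apply Continuous.add
    · exact hH.continuous.abs
    · exact continuous_const.mul ((continuous_id.sub continuous_const).norm)
  have hK : IsCompact (Metric.closedBall x (δ/2)) := isCompact_closedBall x (δ/2)
  have hxK : x ∈ Metric.closedBall x (δ/2) := Metric.mem_closedBall_self (by positivity)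
  obtain ⟨y, hyK, hymin⟩ := hK.exists_isMinOn ⟨x, hxK⟩ hgc.continuousOn
  have hgyx : g y ≤ g x := hymin hxK
  have hgx : g x = |H x| := by simp [hgdef]
  have hgy_lt : |H y| + c * ‖y - x‖ < μ := by
    have : g y < μ := lt_of_le_of_lt hgyx (by rw [hgx]; exact hHx)
    simpa [hgdef] using this
  have hyx : ‖y - x‖ < δ/2 := by
    have h1' : c * ‖y - x‖ < μ := by linarith [abs_nonneg (H y)]
    have h2' : c * (δ/2) = μ := by
      rw [hcdef]; field_simp
    nlinarith [norm_nonneg (y - x)]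
  have hHy : |H y| < μ := by
    have := mul_nonneg hc0.le (norm_nonneg (y - x)); linarith
  have hyband : H y ∈ Ioo (-ν) ν := by
    have h := abs_lt.1 hHy
    exact ⟨by linarith, by linarith⟩
  have hcm : c ≤ m₀ / 2 := by
    rw [hcdef, div_le_iff₀ hδ]
    linarith
  by_cases h0 : H y = 0
  · have hmem : y ∈ H ⁻¹' {0} := h0
    have hle : Metric.infDist x (H ⁻¹' {0}) ≤ dist x y := Metric.infDist_le_dist_of_mem hmem
    simp only [Set.mem_setOf_eq]
    calc Metric.infDist x (H ⁻¹' {0}) ≤ dist x y := hle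
      _ = ‖y - x‖ := by rw [dist_eq_norm, norm_sub_rev]
      _ < δ/2 := hyx
      _ < δ := by linarith
  · exfalso
    set s : ℝ := if 0 < H y then 1 else -1 with hs
    have hs1 : s = 1 ∨ s = -1 := by
      rw [hs]; split <;> simp
    have hsabs : |s| = 1 := by rcases hs1 with h | h <;> simp [h]
    have hsH : s * H y = |H y| := by
      rw [hs]; rcases lt_trichotomy 0 (H y) with h | h | h
      · rw [if_pos h, one_mul, abs_of_pos h]
      · exact absurd h.symm h0
      · rw [if_neg (by linarith), abs_of_neg h]; ring
    have hsHpos : 0 < s * H y := by rw [hsH]; exact abs_pos.2 h0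
    set w : E n := gradient H y with hw
    have hwlb : m₀ ≤ ‖w‖ := hgrad y hyband
    have hw0 : 0 < ‖w‖ := lt_of_lt_of_le hm₀ hwlb
    set v : E n := (-s) • w with hv
    have hnv : ‖v‖ = ‖w‖ := by
      rw [hv, norm_smul]; simp [abs_neg, hsabs]
    have hline : HasDerivAt (fun t : ℝ => y + t • v) v 0 := by
      simpa using ((hasDerivAt_id (0:ℝ)).smul_const v).const_add y
    have hHd : HasDerivAt (fun t : ℝ => H (y + t • v)) (fderiv ℝ H y v) 0 := by
      have hF : HasFDerivAt H (fderiv ℝ H y) (y + (0:ℝ) • v) := by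
        simpa using (hH.differentiable (by simp) y).hasFDerivAt
      exact hF.comp_hasDerivAt 0 hline
    set k : ℝ → ℝ := fun t => s * H (y + t • v) + c * ‖v‖ * t with hk
    have hkd : HasDerivAt k (s * fderiv ℝ H y v + c * ‖v‖) 0 := by
      have hlin : HasDerivAt (fun t : ℝ => c * ‖v‖ * t) (c * ‖v‖) 0 := by
        simpa using (hasDerivAt_id (0:ℝ)).const_mul (c * ‖v‖)
      exact (hHd.const_mul s).add hlin
    have hcontk : Continuous (fun t : ℝ => s * H (y + t • v)) := by
      apply continuous_const.mul
      exact hH.continuous.comp (continuous_const.add (continuous_id.smul continuous_const))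
    have hev1 : ∀ᶠ t in nhds (0:ℝ), 0 < s * H (y + t • v) := by
      have h0' : 0 < s * H (y + (0:ℝ) • v) := by simpa using hsHpos
      exact continuousAt_const.eventually_lt hcontk.continuousAt h0'
    have hcontn : Continuous (fun t : ℝ => ‖y + t • v - x‖) := by
      apply Continuous.norm
      exact (continuous_const.add (continuous_id.smul continuous_const)).sub continuous_const
    have hev2 : ∀ᶠ t in nhds (0:ℝ), ‖y + t • v - x‖ < δ/2 := by
      have h0' : ‖y + (0:ℝ) • v - x‖ < δ/2 := by simpa using hyx
      exact hcontn.continuousAt.eventually_lt continuousAt_const h0'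
    have hev : ∀ᶠ t in nhdsWithin (0:ℝ) (Ioi 0), k 0 ≤ k t := by
      filter_upwards [eventually_nhdsWithin_of_eventually_nhds hev1,
        eventually_nhdsWithin_of_eventually_nhds hev2, self_mem_nhdsWithin]
        with t ht1 ht2 ht3
      have htpos : (0:ℝ) < t := ht3
      set z : E n := y + t • v with hz
      have hzK : z ∈ Metric.closedBall x (δ/2) := by
        rw [Metric.mem_closedBall, dist_eq_norm]
        exact le_of_lt ht2
      have hminz : g y ≤ g z := hymin hzK
      have habsz : |H z| = s * H z := by
        have : |s * H z| = s * H z := abs_of_pos ht1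
        rw [abs_mul, hsabs, one_mul] at this
        exact this
      have habsy : |H y| = s * H y := hsH.symm
      have hnorm : ‖z - x‖ ≤ ‖y - x‖ + t * ‖v‖ := by
        have : z - x = (y - x) + t • v := by rw [hz]; abel
        rw [this]
        calc ‖(y - x) + t • v‖ ≤ ‖y - x‖ + ‖t • v‖ := norm_add_le _ _
          _ = ‖y - x‖ + t * ‖v‖ := by rw [norm_smul, Real.norm_eq_abs, abs_of_pos htpos]
      have hk0 : k 0 = s * H y := by simp [hk]
      have hkt : k t = s * H z + c * ‖v‖ * t := rfl
      rw [hk0, hkt]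
      have hgy' : |H y| + c * ‖y - x‖ ≤ |H z| + c * ‖z - x‖ := hminz
      rw [habsy, habsz] at hgy'
      have hnorm2 : c * ‖z - x‖ ≤ c * ‖y - x‖ + c * ‖v‖ * t := by
        have h' := mul_le_mul_of_nonneg_left hnorm hc0.le
        have h'' : c * (‖y - x‖ + t * ‖v‖) = c * ‖y - x‖ + c * ‖v‖ * t := by ring
        linarith
      linarith
    have hD := deriv_nonneg_of_right_min' hkd hev
    have hfdv : fderiv ℝ H y v = -s * ‖w‖ ^ 2 := by
      rw [fd_eq_inner', ← hw, hv, real_inner_smul_right, real_inner_self_eq_norm_sq]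
    have hs2 : s * s = 1 := by rcases hs1 with h | h <;> rw [h] <;> norm_num
    have hDval : s * fderiv ℝ H y v + c * ‖v‖ = -‖w‖ ^ 2 + c * ‖w‖ := by
      rw [hfdv, hnv]; linear_combination (-(‖w‖:ℝ) ^ 2) * hs2
    rw [hDval] at hD
    exact quad_absurd' m₀ c ‖w‖ hm₀ hcm hwlb hD
end
end

section
/- Uniform positivity of the gradient on a band around the zero level set (Step 1 in the proof of Lemma A.1): Let H:ℝ^{2n}→ℝ be smooth, satisfying (H1) with constants c₁,c₂,c₃ and (H3) with constants c₄,c₅,ν. Then for every x∈H⁻¹((−ν,ν)) one has ‖∇H(x)‖ ≥ max{ (c₂‖x‖²−c₃)/(c₁(‖x‖+1)), c₅/(c₄(‖x‖²+1)) }; consequently inf_{x∈H⁻¹((−ν,ν))}‖∇H(x)‖ ≥ inf_{r≥0} max{ (c₂r²−c₃)/(c₁(r+1)), c₅/(c₄(r²+1)) } > 0, so H has no critical points in H⁻¹((−ν,ν)). -/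
open MeasureTheory intervalIntegral Set
open scoped RealInnerProductSpace Topology

noncomputable section

/-- **Step 1 in the proof of Lemma A.1 (uniform positivity of the gradient on a band
around the zero level set).** -/
theorem gradient_uniformly_positive_on_band {n : ℕ} (H : E n → ℝ) (hH : ContDiff ℝ (⊤ : ℕ∞) H)
    (c₁ c₂ c₃ c₄ c₅ ν : ℝ)
    (hc₁ : 0 < c₁) (hc₂ : 0 < c₂) (hc₃ : 0 ≤ c₃)
    (hc₄ : 0 < c₄) (hc₅ : 0 < c₅) (hν : 0 < ν)
    (h1 : SatH1 H c₁ c₂ c₃) (h3 : SatH3 H c₄ c₅ ν) :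
    (∀ x ∈ H ⁻¹' Ioo (-ν) ν,
      max ((c₂ * ‖x‖ ^ 2 - c₃) / (c₁ * (‖x‖ + 1))) (c₅ / (c₄ * (‖x‖ ^ 2 + 1)))
        ≤ ‖gradient H x‖) ∧
    (0 < sInf {y : ℝ | ∃ r : ℝ, 0 ≤ r ∧
        y = max ((c₂ * r ^ 2 - c₃) / (c₁ * (r + 1))) (c₅ / (c₄ * (r ^ 2 + 1)))}) ∧
    (∀ x ∈ H ⁻¹' Ioo (-ν) ν,
      sInf {y : ℝ | ∃ r : ℝ, 0 ≤ r ∧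
          y = max ((c₂ * r ^ 2 - c₃) / (c₁ * (r + 1))) (c₅ / (c₄ * (r ^ 2 + 1)))}
        ≤ ‖gradient H x‖) ∧
    (∀ x ∈ H ⁻¹' Ioo (-ν) ν, gradient H x ≠ 0) :=  by
  classical
  obtain ⟨X₁, -, -, hX₁b, hX₁g⟩ := h1
  obtain ⟨X₃, -, hX₃b, hX₃g⟩ := h3
  have hgrad : ∀ (x v : E n), fderiv ℝ H x v = @inner ℝ _ _ (gradient H x) v := by
    intro x v
    simp [gradient, InnerProductSpace.toDual_symm_apply]
  -- pointwise bound from (H1), valid everywhere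
  have key1 : ∀ x : E n, (c₂ * ‖x‖ ^ 2 - c₃) / (c₁ * (‖x‖ + 1)) ≤ ‖gradient H x‖ := by
    intro x
    have hpos : 0 < c₁ * (‖x‖ + 1) := by positivity
    rw [div_le_iff₀ hpos]
    calc c₂ * ‖x‖ ^ 2 - c₃ ≤ fderiv ℝ H x (X₁ x) := hX₁g x
      _ = @inner ℝ _ _ (gradient H x) (X₁ x) := hgrad x _
      _ ≤ ‖gradient H x‖ * ‖X₁ x‖ := real_inner_le_norm _ _
      _ ≤ ‖gradient H x‖ * (c₁ * (‖x‖ + 1)) :=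
          mul_le_mul_of_nonneg_left (hX₁b x) (norm_nonneg _)
  -- pointwise bound from (H3), valid on the band
  have key3 : ∀ x ∈ H ⁻¹' Ioo (-ν) ν,
      c₅ / (c₄ * (‖x‖ ^ 2 + 1)) ≤ ‖gradient H x‖ := by
    intro x hx
    have hpos : 0 < c₄ * (‖x‖ ^ 2 + 1) := by positivity
    rw [div_le_iff₀ hpos]
    calc c₅ ≤ fderiv ℝ H x (X₃ x) := hX₃g x hx
      _ = @inner ℝ _ _ (gradient H x) (X₃ x) := hgrad x _
      _ ≤ ‖gradient H x‖ * ‖X₃ x‖ := real_inner_le_norm _ _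
      _ ≤ ‖gradient H x‖ * (c₄ * (‖x‖ ^ 2 + 1)) :=
          mul_le_mul_of_nonneg_left (hX₃b x hx) (norm_nonneg _)
  have Hmax : ∀ x ∈ H ⁻¹' Ioo (-ν) ν,
      max ((c₂ * ‖x‖ ^ 2 - c₃) / (c₁ * (‖x‖ + 1))) (c₅ / (c₄ * (‖x‖ ^ 2 + 1)))
        ≤ ‖gradient H x‖ := fun x hx => max_le (key1 x) (key3 x hx)
  -- uniform positive lower bound for the max
  set R : ℝ := 1 + c₃ / c₂ with hR
  have hR1 : 1 ≤ R := by
    rw [hR]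
    have : 0 ≤ c₃ / c₂ := div_nonneg hc₃ hc₂.le
    linarith
  have hRc : c₂ * R = c₂ + c₃ := by
    rw [hR, mul_add, mul_one, mul_div_cancel₀ _ hc₂.ne']
  set m : ℝ := min (c₂ / (2 * c₁)) (c₅ / (c₄ * (R ^ 2 + 1))) with hm
  have hmpos : 0 < m := lt_min (by positivity) (by positivity)
  have hmmax : ∀ r : ℝ, 0 ≤ r →
      m ≤ max ((c₂ * r ^ 2 - c₃) / (c₁ * (r + 1))) (c₅ / (c₄ * (r ^ 2 + 1))) := by
    intro r hr
    rcases le_total r R with h | h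
    · refine le_trans (min_le_right _ _) (le_trans ?_ (le_max_right _ _))
      have hr2 : r ^ 2 ≤ R ^ 2 := by nlinarith
      exact div_le_div_of_nonneg_left hc₅.le (by positivity)
        (by nlinarith)
    · refine le_trans (min_le_left _ _) (le_trans ?_ (le_max_left _ _))
      have h1r : 1 ≤ r := le_trans hR1 h
      have hcr : c₂ + c₃ ≤ c₂ * r := by
        calc c₂ + c₃ = c₂ * R := hRc.symm
          _ ≤ c₂ * r := by nlinarith
      rw [div_le_div_iff₀ (by positivity) (by positivity)]
      have hq : c₂ * r + c₃ ≤ c₂ * r ^ 2 := by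
        nlinarith [mul_le_mul_of_nonneg_left hcr hr]
      nlinarith [mul_le_mul_of_nonneg_right hq (by positivity : (0:ℝ) ≤ 2 * c₁),
        mul_nonneg (mul_nonneg hc₁.le hc₂.le) (sub_nonneg.2 h1r)]
  set S : Set ℝ := {y : ℝ | ∃ r : ℝ, 0 ≤ r ∧
      y = max ((c₂ * r ^ 2 - c₃) / (c₁ * (r + 1))) (c₅ / (c₄ * (r ^ 2 + 1)))} with hS
  have hSne : S.Nonempty :=
    ⟨_, 0, le_refl 0, rfl⟩
  have hSlb : ∀ y ∈ S, m ≤ y := by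
    rintro y ⟨r, hr, rfl⟩
    exact hmmax r hr
  have hSbdd : BddBelow S := ⟨m, hSlb⟩
  have hinf : m ≤ sInf S := le_csInf hSne hSlb
  refine ⟨Hmax, lt_of_lt_of_le hmpos hinf, ?_, ?_⟩
  · intro x hx
    have hmem : max ((c₂ * ‖x‖ ^ 2 - c₃) / (c₁ * (‖x‖ + 1)))
        (c₅ / (c₄ * (‖x‖ ^ 2 + 1))) ∈ S := ⟨‖x‖, norm_nonneg x, rfl⟩
    exact le_trans (csInf_le hSbdd hmem) (Hmax x hx)
  · intro x hx hzero
    have h := key3 x hx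
    rw [hzero, norm_zero] at h
    have : 0 < c₅ / (c₄ * (‖x‖ ^ 2 + 1)) := by positivity
    linarith
end
end

section
/- Uniform tubular neighbourhood of a level set (Lemma A.2): Let H:ℝ^m→ℝ be a C² function with Σ:=H⁻¹(0) nonempty, inf_{x∈Σ}‖∇H(x)‖>0 and sup_{x∈ℝ^m}‖D²H_x‖=M<+∞. Then there exists δ̃=δ̃(H)>0 such that the normal exponential map E(x,ρ):=x+ρ·∇H(x)/‖∇H(x)‖, defined for x∈Σ and ρ∈(−δ̃,δ̃), is injective and its image equals {y∈ℝ^m : dist(y,Σ)<δ̃}; in other words, every point at distance less than δ̃ from Σ is uniquely of the form x+ρ·∇H(x)/‖∇H(x)‖ with x∈Σ, |ρ|<δ̃ (the paper concludes that the normal exponential map is a diffeomorphism from the δ̃-disc normal bundle of Σ onto the δ̃-neighbourhood of Σ). -/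
open Set

noncomputable section

open Metric
open scoped RealInnerProductSpace

/-!
Write `c = inf_Σ ‖∇H‖` and `ν = ∇H / ‖∇H‖`. Taylor's formula with `‖D²H‖ ≤ M` makes `Σ` uniformly
flat: for `a, b ∈ Σ` the normal component `⟪ν a, b - a⟫` is at most `(M / c) ‖b - a‖²`. Hence if
`x + ρ ν x = x' + ρ' ν x'` with `|ρ|, |ρ'| < δ`, then `‖x' - x‖² ≤ 2 (M / c) δ ‖x' - x‖²`, which
forces `x = x'` as soon as `2 (M / c) δ < 1`. Conversely, a point `y` near `Σ` has a nearest point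
`x ∈ Σ` (closed set in finite dimension), and by Lagrange multipliers `y - x` is parallel to
`∇H x`, so `y = x ± dist(y, Σ) ν x`.
-/

section SecondDerivative

variable {E G : Type*} [NormedAddCommGroup E] [NormedSpace ℝ E] [NormedAddCommGroup G]
  [NormedSpace ℝ G] {f : E → G} {M : ℝ}

theorem norm_fderiv_fderiv (f : E → G) (x : E) :
    ‖fderiv ℝ (fderiv ℝ f) x‖ = ‖iteratedFDeriv ℝ 2 f x‖ := by
  rw [← norm_iteratedFDeriv_one, norm_iteratedFDeriv_fderiv]

theorem norm_fderiv_sub_fderiv_le (hf : ContDiff ℝ 2 f)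
    (hM : ∀ x, ‖iteratedFDeriv ℝ 2 f x‖ ≤ M) (x y : E) :
    ‖fderiv ℝ f x - fderiv ℝ f y‖ ≤ M * ‖x - y‖ :=
  convex_univ.norm_image_sub_le_of_norm_fderiv_le
    (fun z _ => (hf.fderiv_right le_rfl).differentiable one_ne_zero z)
    (fun z _ => (norm_fderiv_fderiv f z).trans_le (hM z)) (mem_univ y) (mem_univ x)

theorem norm_sub_sub_fderiv_le (hf : ContDiff ℝ 2 f)
    (hM : ∀ x, ‖iteratedFDeriv ℝ 2 f x‖ ≤ M) (a b : E) :
    ‖f b - f a - fderiv ℝ f a (b - a)‖ ≤ M * ‖b - a‖ ^ 2 := by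
  have hM0 : 0 ≤ M := (norm_nonneg _).trans (hM a)
  have hbound : ∀ z ∈ segment ℝ a b, ‖fderiv ℝ f z - fderiv ℝ f a‖ ≤ M * ‖b - a‖ := fun z hz =>
    (norm_fderiv_sub_fderiv_le hf hM z a).trans
      (mul_le_mul_of_nonneg_left (norm_sub_le_of_mem_segment hz) hM0)
  have := (convex_segment a b).norm_image_sub_le_of_norm_fderiv_le'
    (fun z _ => hf.differentiable two_ne_zero z) hbound (left_mem_segment ℝ a b)
    (right_mem_segment ℝ a b)
  rwa [mul_assoc, ← sq] at this

end SecondDerivative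

section LevelSet

variable {F : Type*} [NormedAddCommGroup F] [InnerProductSpace ℝ F] [CompleteSpace F]
  {H : F → ℝ}

theorem abs_inner_gradient_sub_le {M : ℝ} (hH : ContDiff ℝ 2 H)
    (hM : ∀ x, ‖iteratedFDeriv ℝ 2 H x‖ ≤ M) {a b : F} (hab : H a = H b) :
    |⟪gradient H a, b - a⟫| ≤ M * ‖b - a‖ ^ 2 := by
  have := norm_sub_sub_fderiv_le hH hM a b
  rwa [hab, sub_self, zero_sub, norm_neg, ← inner_gradient_left] at this

theorem abs_inner_normalize_gradient_sub_le {M c : ℝ} (hH : ContDiff ℝ 2 H)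
    (hM : ∀ x, ‖iteratedFDeriv ℝ 2 H x‖ ≤ M) (hc : 0 < c) {a b : F}
    (ha : c ≤ ‖gradient H a‖) (hab : H a = H b) :
    |⟪‖gradient H a‖⁻¹ • gradient H a, b - a⟫| ≤ M / c * ‖b - a‖ ^ 2 := by
  rw [real_inner_smul_left, abs_mul, abs_inv, abs_norm, inv_mul_le_iff₀ (hc.trans_le ha)]
  calc |⟪gradient H a, b - a⟫| ≤ M * ‖b - a‖ ^ 2 := abs_inner_gradient_sub_le hH hM hab
    _ = c * (M / c * ‖b - a‖ ^ 2) := by field_simp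
    _ ≤ ‖gradient H a‖ * (M / c * ‖b - a‖ ^ 2) := by
      have hM0 : 0 ≤ M := (norm_nonneg _).trans (hM a)
      gcongr

theorem exists_sub_eq_smul_gradient_of_isMinOn {x y : F} {c : ℝ}
    (hH : HasStrictFDerivAt H (fderiv ℝ H x) x) (hg : gradient H x ≠ 0) (hx : H x = c)
    (hmin : IsMinOn (dist y) (H ⁻¹' {c}) x) : ∃ t : ℝ, y - x = t • gradient H x := by
  have hextr : IsLocalExtrOn (fun z => ‖z - y‖ ^ 2) {z | H z = H x} x := by
    refine .inl (Filter.eventually_of_mem self_mem_nhdsWithin fun z hz => ?_)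
    have : dist y x ≤ dist y z := hmin (by simpa [hx] using hz)
    rw [dist_comm y, dist_comm y, dist_eq_norm, dist_eq_norm] at this
    show ‖x - y‖ ^ 2 ≤ ‖z - y‖ ^ 2
    gcongr
  obtain ⟨a, b, hab, hmul⟩ := hextr.exists_multipliers_of_hasStrictFDerivAt_1d hH
    ((hasStrictFDerivAt_norm_sq (x - y)).comp x ((hasStrictFDerivAt_id x).sub_const y))
  have hcomb : a • gradient H x + (2 * b) • (x - y) = 0 := by
    refine ext_inner_right ℝ fun v => ?_
    have := congrArg (· v) hmul
    simp only [add_apply, smul_apply, ContinuousLinearMap.comp_apply,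
      ContinuousLinearMap.id_apply, innerSL_apply_apply, zero_apply, smul_eq_mul, nsmul_eq_mul,
      Nat.cast_ofNat] at this
    rw [inner_zero_left, inner_add_left, real_inner_smul_left, real_inner_smul_left,
      inner_gradient_left]
    linarith
  have hb : b ≠ 0 := by
    rintro rfl
    have ha : a ≠ 0 := fun ha => hab (by simp [ha])
    simp only [mul_zero, zero_smul, add_zero, smul_eq_zero] at hcomb
    exact hcomb.elim ha hg
  refine ⟨a / (2 * b), ?_⟩
  rw [div_eq_inv_mul, mul_smul, eq_inv_smul_iff₀ (mul_ne_zero two_ne_zero hb)]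
  linear_combination (norm := module) -hcomb

end LevelSet

section NormalMap

variable {F : Type*} [NormedAddCommGroup F] [InnerProductSpace ℝ F]

def normalMap (ν : F → F) (p : F × ℝ) : F := p.1 + p.2 • ν p.1

variable {S : Set F} {ν : F → F} {δ : ℝ}

theorem injOn_normalMap {K : ℝ} (hν : ∀ x ∈ S, ‖ν x‖ = 1)
    (hK : ∀ a ∈ S, ∀ b ∈ S, |⟪ν a, b - a⟫| ≤ K * ‖b - a‖ ^ 2) (hδ : 2 * K * δ < 1) :
    InjOn (normalMap ν) {p | p.1 ∈ S ∧ |p.2| < δ} := by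
  rintro ⟨x, ρ⟩ ⟨hx, hρ⟩ ⟨x', ρ'⟩ ⟨hx', hρ'⟩ heq
  simp only [normalMap] at heq hρ hρ' hx hx'
  have hterm : ∀ {a b : F} {r : ℝ}, a ∈ S → b ∈ S → |r| < δ →
      r * ⟪ν a, b - a⟫ ≤ δ * (K * ‖b - a‖ ^ 2) := fun {a b r} ha hb hr =>
    calc r * ⟪ν a, b - a⟫ ≤ |r| * |⟪ν a, b - a⟫| := by rw [← abs_mul]; exact le_abs_self _
      _ ≤ δ * (K * ‖b - a‖ ^ 2) :=
        mul_le_mul hr.le (hK _ ha _ hb) (abs_nonneg _) ((abs_nonneg _).trans hr.le)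
  have hbase : x = x' := by
    have hd : x' - x = ρ • ν x - ρ' • ν x' := by
      rw [sub_eq_sub_iff_add_eq_add, ← heq, add_comm]
    have hsq : ‖x' - x‖ ^ 2 ≤ 2 * K * δ * ‖x' - x‖ ^ 2 :=
      calc ‖x' - x‖ ^ 2 = ρ * ⟪ν x, x' - x⟫ + ρ' * ⟪ν x', x - x'⟫ := by
            rw [← real_inner_self_eq_norm_sq]
            nth_rw 2 [hd]
            rw [inner_sub_right, real_inner_smul_right, real_inner_smul_right,
              real_inner_comm (ν x), real_inner_comm (ν x'), ← neg_sub x' x, inner_neg_right]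
            ring
        _ ≤ δ * (K * ‖x' - x‖ ^ 2) + δ * (K * ‖x - x'‖ ^ 2) :=
            add_le_add (hterm hx hx' hρ) (hterm hx' hx hρ')
        _ = 2 * K * δ * ‖x' - x‖ ^ 2 := by rw [norm_sub_rev x x']; ring
    have : ‖x' - x‖ ^ 2 = 0 := by nlinarith [sq_nonneg ‖x' - x‖]
    rw [sq_eq_zero_iff, norm_eq_zero, sub_eq_zero] at this
    exact this.symm
  subst hbase
  have hν0 : ν x ≠ 0 := norm_ne_zero_iff.1 (by rw [hν x hx]; exact one_ne_zero)
  rw [Prod.mk.injEq]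
  exact ⟨rfl, smul_left_injective ℝ hν0 (add_left_cancel heq)⟩

theorem dist_normalMap (hν : ∀ x ∈ S, ‖ν x‖ = 1) {p : F × ℝ} (hp : p.1 ∈ S) :
    dist (normalMap ν p) p.1 = |p.2| := by
  rw [normalMap, dist_eq_norm, add_sub_cancel_left, norm_smul, hν _ hp, mul_one, Real.norm_eq_abs]

theorem image_normalMap_eq [ProperSpace F] (hS : IsClosed S) (hne : S.Nonempty)
    (hν : ∀ x ∈ S, ‖ν x‖ = 1)
    (hperp : ∀ x ∈ S, ∀ y, IsMinOn (dist y) S x → ∃ t : ℝ, y - x = t • ν x) :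
    normalMap ν '' {p | p.1 ∈ S ∧ |p.2| < δ} = {y | infDist y S < δ} := by
  refine Subset.antisymm ?_ fun y (hy : infDist y S < δ) => ?_
  · rintro _ ⟨p, ⟨hp, hpδ⟩, rfl⟩
    exact (infDist_le_dist_of_mem hp).trans_lt (dist_normalMap hν hp ▸ hpδ)
  obtain ⟨x, hx, hxy⟩ := hS.exists_infDist_eq_dist hne y
  have hmin : IsMinOn (dist y) S x := fun z hz => hxy ▸ infDist_le_dist_of_mem hz
  obtain ⟨t, ht⟩ := hperp x hx y hmin
  have hyx : y = normalMap ν (x, t) := by rw [normalMap, ← ht, add_sub_cancel]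
  refine ⟨(x, t), ⟨hx, ?_⟩, hyx.symm⟩
  rwa [← dist_normalMap hν (p := (x, t)) hx, ← hyx, ← hxy]

end NormalMap

/-- **Lemma A.2 (uniform tubular neighbourhood of a level set).**
`H : ℝ^m → ℝ` is `C²`, `Σ = H⁻¹(0)` is nonempty, `inf_Σ ‖∇H‖ > 0` and
`sup ‖D²H‖ = M < ∞`.  Then there is `δ̃ > 0` such that the normal exponential map
`(x,ρ) ↦ x + ρ·∇H(x)/‖∇H(x)‖` is injective on `Σ × (−δ̃, δ̃)` and its image is exactly
the `δ̃`-neighbourhood of `Σ`. -/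
theorem uniform_tubular_neighbourhood {m : ℕ}
    (H : EuclideanSpace ℝ (Fin m) → ℝ) (hH : ContDiff ℝ 2 H)
    (hne : (H ⁻¹' {0}).Nonempty)
    (hgrad : 0 < sInf ((fun x => ‖gradient H x‖) '' (H ⁻¹' {0})))
    (M : ℝ) (hMfin : ∀ x, ‖iteratedFDeriv ℝ 2 H x‖ ≤ M) :
    ∃ δ : ℝ, 0 < δ ∧
      Set.InjOn
        (fun p : EuclideanSpace ℝ (Fin m) × ℝ =>
          p.1 + p.2 • (‖gradient H p.1‖⁻¹ • gradient H p.1))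
        {p | H p.1 = 0 ∧ |p.2| < δ} ∧
      (fun p : EuclideanSpace ℝ (Fin m) × ℝ =>
          p.1 + p.2 • (‖gradient H p.1‖⁻¹ • gradient H p.1))
        '' {p | H p.1 = 0 ∧ |p.2| < δ}
        = {y | Metric.infDist y (H ⁻¹' {0}) < δ} := by
  set c := sInf ((fun x => ‖gradient H x‖) '' (H ⁻¹' {0}))
  have hc : ∀ x ∈ H ⁻¹' {0}, c ≤ ‖gradient H x‖ := fun x hx =>
    csInf_le ⟨0, by rintro _ ⟨z, -, rfl⟩; positivity⟩ (mem_image_of_mem _ hx)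
  have hg : ∀ x ∈ H ⁻¹' {0}, gradient H x ≠ 0 := fun x hx =>
    norm_pos_iff.1 (hgrad.trans_le (hc x hx))
  have hν : ∀ x ∈ H ⁻¹' {0}, ‖‖gradient H x‖⁻¹ • gradient H x‖ = 1 := fun x hx =>
    norm_smul_inv_norm (hg x hx)
  have hperp : ∀ x ∈ H ⁻¹' {0}, ∀ y, IsMinOn (dist y) (H ⁻¹' {0}) x →
      ∃ t : ℝ, y - x = t • (‖gradient H x‖⁻¹ • gradient H x) := fun x hx y hmin => by
    obtain ⟨t, ht⟩ := exists_sub_eq_smul_gradient_of_isMinOn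
      (hH.hasStrictFDerivAt two_ne_zero) (hg x hx) hx hmin
    exact ⟨t * ‖gradient H x‖, by rw [ht, mul_smul, smul_inv_smul₀ (norm_ne_zero_iff.2 (hg x hx))]⟩
  have hM : 0 ≤ M := (norm_nonneg _).trans (hMfin 0)
  refine ⟨c / (2 * M + c), div_pos hgrad (by linarith), ?_, ?_⟩
  · refine injOn_normalMap (K := M / c) hν (fun a ha b hb => ?_) (by field_simp; linarith)
    exact abs_inner_normalize_gradient_sub_le hH hMfin hgrad (hc a ha) (ha.trans hb.symm)
  · exact image_normalMap_eq (isClosed_singleton.preimage hH.continuous) hne hν hperp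
end
end
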